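/- arXiv:2406.13973 — 5 statements merged into one kernel-verified Lean document; each statement's English description precedes it below -/
import Mathlib

section
/- The ring homomorphism A/(x₁⋯xₙ) → ∏_{i=1}^{n} A/(xᵢ) induced by the quotient maps is injective, and its range consists exactly of the tuples (f̄ᵢ)ᵢ such that for all i ≠ j the images of f̄ᵢ and f̄ⱼ under the natural maps A/(xᵢ) → A/(xᵢ,xⱼ) and A/(xⱼ) → A/(xᵢ,xⱼ) coincide. Equivalently: for every family of polynomials f₁,…,fₙ ∈ A with fᵢ ≡ fⱼ mod (xᵢ,xⱼ) for all i ≠ j, there exists f ∈ A with f ≡ fᵢ mod (xᵢ) for all i, and f is unique modulo the ideal (x₁⋯xₙ). -/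
/-!
Divisibility by `xᵢ` is a condition on the support, so a polynomial divisible by every `xᵢ` is
divisible by the monomial `x₁⋯xₙ`; this gives injectivity and uniqueness. Existence is proved
one variable at a time: if `g ≡ fᵢ mod xᵢ` for `i ∈ s`, replace `g` by `g + (f_a - g)|_{x_a = 0}`.
The new polynomial is `≡ f_a mod x_a`, and for `i ∈ s` the correction lies in `(xᵢ)` because
`f_a - g ∈ (x_a, xᵢ)` and the substitution kills `x_a`.
-/

namespace MvPolynomial

section CommSemiring

variable {R σ : Type*} [CommSemiring R]

theorem monomial_one_dvd_iff_forall_le {m : σ →₀ ℕ} {p : MvPolynomial σ R} :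
    monomial m (1 : R) ∣ p ↔ ∀ d ∈ p.support, m ≤ d := by
  rw [monomial_one_dvd_iff_modMonomial_eq_zero]
  constructor
  · intro h d hd
    by_contra hle
    have := coeff_modMonomial_of_not_le p hle
    rw [h, coeff_zero] at this
    exact mem_support_iff.mp hd this.symm
  · intro h
    ext d
    rw [coeff_zero]
    by_cases hle : m ≤ d
    · exact coeff_modMonomial_of_le p hle
    · rw [coeff_modMonomial_of_not_le p hle]
      exact notMem_support_iff.mp fun hd => hle (h d hd)

theorem prod_X_dvd_iff (s : Finset σ) {p : MvPolynomial σ R} :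
    (∏ i ∈ s, X i) ∣ p ↔ ∀ i ∈ s, (X i : MvPolynomial σ R) ∣ p := by
  classical
  have hX : ∀ i, (X i : MvPolynomial σ R) = monomial (Finsupp.single i 1) 1 := fun _ => rfl
  have hle : ∀ d : σ →₀ ℕ, ∑ i ∈ s, Finsupp.single i 1 ≤ d ↔ ∀ i ∈ s, Finsupp.single i 1 ≤ d := by
    intro d
    simp only [Finsupp.single_le_iff]
    simp only [Finsupp.le_def, Finsupp.finsetSum_apply, Finsupp.single_apply, Finset.sum_ite_eq']
    refine ⟨fun h i hi => by simpa [hi] using h i, fun h i => ?_⟩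
    split_ifs with hi
    exacts [h i hi, Nat.zero_le _]
  simp only [hX, ← monomial_sum_one, monomial_one_dvd_iff_forall_le, hle]
  exact ⟨fun h i hi d hd => h d hd i hi, fun h d hd i hi => h i hi d hd⟩

theorem mem_span_prod_X_iff [Fintype σ] {p : MvPolynomial σ R} :
    p ∈ Ideal.span {∏ i, X i} ↔ ∀ i, p ∈ Ideal.span {X i} := by
  simp only [Ideal.mem_span_singleton, prod_X_dvd_iff, Finset.mem_univ, true_implies]

end CommSemiring

section CommRing

variable {R σ : Type*} [CommRing R]

theorem X_dvd_sub_aeval_update_zero [DecidableEq σ] (i : σ) (p : MvPolynomial σ R) :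
    X i ∣ p - aeval (Function.update X i 0) p := by
  have hmk : (Ideal.Quotient.mkₐ R (Ideal.span {(X i : MvPolynomial σ R)})).comp
      (aeval (Function.update X i 0)) = Ideal.Quotient.mkₐ R _ := by
    refine algHom_ext fun j => ?_
    rcases eq_or_ne j i with rfl | hj
    · simp
    · simp [hj]
  rw [← Ideal.mem_span_singleton, ← Ideal.Quotient.eq]
  exact (DFunLike.congr_fun hmk p).symm

theorem exists_forall_X_dvd_sub_of_pairwise (f : σ → MvPolynomial σ R)
    (hf : ∀ i j, i ≠ j → f i - f j ∈ Ideal.span {X i, X j}) (s : Finset σ) :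
    ∃ g, ∀ i ∈ s, X i ∣ g - f i := by
  classical
  induction s using Finset.induction_on with
  | empty => exact ⟨0, by simp⟩
  | @insert a s ha ih =>
    obtain ⟨g, hg⟩ := ih
    set φ := aeval (R := R) (Function.update (X : σ → MvPolynomial σ R) a 0)
    refine ⟨g + φ (f a - g), fun i hi => ?_⟩
    rcases Finset.mem_insert.mp hi with rfl | hi
    · have := (X_dvd_sub_aeval_update_zero i (f i - g)).neg_right
      convert this using 1
      ring
    · have hia : i ≠ a := fun h => ha (h ▸ hi)
      obtain ⟨u, v, huv⟩ := Ideal.mem_span_pair.mp (hf a i hia.symm)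
      obtain ⟨w, hw⟩ := hg i hi
      have hφ : φ (f a - g) = X i * (φ v - φ w) := by
        have : f a - g = u * X a + v * X i - X i * w := by rw [← hw, huv]; ring
        simp only [this, φ, map_add, map_sub, map_mul, aeval_X, Function.update_self,
          Function.update_of_ne hia]
        ring
      rw [show g + φ (f a - g) - f i = (g - f i) + φ (f a - g) by ring, hφ, hw, ← mul_add]
      exact dvd_mul_right _ _

theorem exists_forall_sub_mem_span_X_of_pairwise [Fintype σ] (f : σ → MvPolynomial σ R)
    (hf : ∀ i j, i ≠ j → f i - f j ∈ Ideal.span {X i, X j}) :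
    ∃ g, ∀ i, g - f i ∈ Ideal.span {X i} := by
  obtain ⟨g, hg⟩ := exists_forall_X_dvd_sub_of_pairwise f hf Finset.univ
  exact ⟨g, fun i => Ideal.mem_span_singleton.mpr (hg i (Finset.mem_univ i))⟩

end CommRing

end MvPolynomial

open MvPolynomial

theorem statement0_general (k : Type) [Field k] (n : ℕ) :
    (Function.Injective
        (Pi.ringHom fun i : Fin n =>
          Ideal.Quotient.factor
            (S := Ideal.span {∏ j : Fin n, (X j : MvPolynomial (Fin n) k)})
            (T := Ideal.span {(X i : MvPolynomial (Fin n) k)})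
            (Ideal.span_singleton_le_span_singleton.mpr
              (Finset.dvd_prod_of_mem _ (Finset.mem_univ i)))) ∧
      ∀ s : ∀ i : Fin n, MvPolynomial (Fin n) k ⧸ Ideal.span {(X i : MvPolynomial (Fin n) k)},
        (s ∈ Set.range
            (Pi.ringHom fun i : Fin n =>
              Ideal.Quotient.factor
                (S := Ideal.span {∏ j : Fin n, (X j : MvPolynomial (Fin n) k)})
                (T := Ideal.span {(X i : MvPolynomial (Fin n) k)})
                (Ideal.span_singleton_le_span_singleton.mpr
                  (Finset.dvd_prod_of_mem _ (Finset.mem_univ i)))) ↔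
          ∀ i j : Fin n, i ≠ j →
            Ideal.Quotient.factor (S := Ideal.span {(X i : MvPolynomial (Fin n) k)})
                (T := Ideal.span {(X i : MvPolynomial (Fin n) k)} ⊔
                  Ideal.span {(X j : MvPolynomial (Fin n) k)}) le_sup_left (s i) =
              Ideal.Quotient.factor (S := Ideal.span {(X j : MvPolynomial (Fin n) k)})
                (T := Ideal.span {(X i : MvPolynomial (Fin n) k)} ⊔
                  Ideal.span {(X j : MvPolynomial (Fin n) k)}) le_sup_right (s j))) ∧
    ∀ f : Fin n → MvPolynomial (Fin n) k,
      (∀ i j : Fin n, i ≠ j →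
          f i - f j ∈
            Ideal.span {(X i : MvPolynomial (Fin n) k), (X j : MvPolynomial (Fin n) k)}) →
        (∃ g : MvPolynomial (Fin n) k,
            ∀ i : Fin n, g - f i ∈ Ideal.span {(X i : MvPolynomial (Fin n) k)}) ∧
          ∀ g g' : MvPolynomial (Fin n) k,
            (∀ i : Fin n, g - f i ∈ Ideal.span {(X i : MvPolynomial (Fin n) k)}) →
            (∀ i : Fin n, g' - f i ∈ Ideal.span {(X i : MvPolynomial (Fin n) k)}) →
            g - g' ∈ Ideal.span {∏ j : Fin n, (X j : MvPolynomial (Fin n) k)} := by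
  have glue := exists_forall_sub_mem_span_X_of_pairwise (R := k) (σ := Fin n)
  refine ⟨⟨?_, fun s => ⟨?_, fun hs => ?_⟩⟩, fun f hf => ⟨glue f hf, fun g g' hg hg' => ?_⟩⟩
  · intro a b hab
    obtain ⟨p, rfl⟩ := Ideal.Quotient.mk_surjective a
    obtain ⟨q, rfl⟩ := Ideal.Quotient.mk_surjective b
    refine Ideal.Quotient.eq.mpr (mem_span_prod_X_iff.mpr fun i => Ideal.Quotient.eq.mp ?_)
    simpa [Pi.ringHom] using congrFun hab i
  · rintro ⟨q, rfl⟩ i j -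
    obtain ⟨p, rfl⟩ := Ideal.Quotient.mk_surjective q
    simp [Pi.ringHom]
  · choose f hf using fun i => Ideal.Quotient.mk_surjective (s i)
    obtain ⟨g, hg⟩ := glue f fun i j hij => by
      have := hs i j hij
      rw [← hf i, ← hf j, Ideal.Quotient.factor_mk, Ideal.Quotient.factor_mk,
        Ideal.Quotient.eq] at this
      rwa [Ideal.span_insert]
    refine ⟨Ideal.Quotient.mk _ g, funext fun i => ?_⟩
    simpa [Pi.ringHom, ← hf i] using Ideal.Quotient.eq.mpr (hg i)
  · exact mem_span_prod_X_iff.mpr fun i => by simpa using sub_mem (hg i) (hg' i)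

/-- Chinese-remainder–style gluing for the simple normal crossings model
`k[x₁,…,xₙ]/(x₁⋯xₙ) → ∏ᵢ k[x₁,…,xₙ]/(xᵢ)`:  the induced ring homomorphism is injective and
its range consists exactly of the compatible tuples; equivalently, every family of
polynomials agreeing pairwise modulo `(xᵢ, xⱼ)` glues to a polynomial, uniquely modulo
`(x₁⋯xₙ)`. -/
theorem statement0 (k : Type) [Field k] (n : ℕ) (hn : 1 ≤ n) :
    (Function.Injective
        (Pi.ringHom fun i : Fin n =>
          Ideal.Quotient.factor
            (S := Ideal.span {∏ j : Fin n, (X j : MvPolynomial (Fin n) k)})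
            (T := Ideal.span {(X i : MvPolynomial (Fin n) k)})
            (Ideal.span_singleton_le_span_singleton.mpr
              (Finset.dvd_prod_of_mem _ (Finset.mem_univ i)))) ∧
      ∀ s : ∀ i : Fin n, MvPolynomial (Fin n) k ⧸ Ideal.span {(X i : MvPolynomial (Fin n) k)},
        (s ∈ Set.range
            (Pi.ringHom fun i : Fin n =>
              Ideal.Quotient.factor
                (S := Ideal.span {∏ j : Fin n, (X j : MvPolynomial (Fin n) k)})
                (T := Ideal.span {(X i : MvPolynomial (Fin n) k)})
                (Ideal.span_singleton_le_span_singleton.mpr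
                  (Finset.dvd_prod_of_mem _ (Finset.mem_univ i)))) ↔
          ∀ i j : Fin n, i ≠ j →
            Ideal.Quotient.factor (S := Ideal.span {(X i : MvPolynomial (Fin n) k)})
                (T := Ideal.span {(X i : MvPolynomial (Fin n) k)} ⊔
                  Ideal.span {(X j : MvPolynomial (Fin n) k)}) le_sup_left (s i) =
              Ideal.Quotient.factor (S := Ideal.span {(X j : MvPolynomial (Fin n) k)})
                (T := Ideal.span {(X i : MvPolynomial (Fin n) k)} ⊔
                  Ideal.span {(X j : MvPolynomial (Fin n) k)}) le_sup_right (s j))) ∧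
    ∀ f : Fin n → MvPolynomial (Fin n) k,
      (∀ i j : Fin n, i ≠ j →
          f i - f j ∈
            Ideal.span {(X i : MvPolynomial (Fin n) k), (X j : MvPolynomial (Fin n) k)}) →
        (∃ g : MvPolynomial (Fin n) k,
            ∀ i : Fin n, g - f i ∈ Ideal.span {(X i : MvPolynomial (Fin n) k)}) ∧
          ∀ g g' : MvPolynomial (Fin n) k,
            (∀ i : Fin n, g - f i ∈ Ideal.span {(X i : MvPolynomial (Fin n) k)}) →
            (∀ i : Fin n, g' - f i ∈ Ideal.span {(X i : MvPolynomial (Fin n) k)}) →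
            g - g' ∈ Ideal.span {∏ j : Fin n, (X j : MvPolynomial (Fin n) k)} :=
  statement0_general k n
end

section
/- The ring homomorphism S → ∏_{i=1}^{n} Sᵢ induced by the quotient maps qᵢ is injective, and its range consists exactly of the compatible tuples, i.e. the tuples (sᵢ)ᵢ ∈ ∏ᵢ Sᵢ such that for all i ≠ j the images of sᵢ and sⱼ under the natural maps Sᵢ → S_{ij} and Sⱼ → S_{ij} coincide. (In the language of the paper: (S, Sᵢ, qᵢ) is fiber product data, i.e. S is flat over the simple normal crossings model and hence is the fiber product of the Sᵢ.) -/
open MvPolynomial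

/-- The principal ideal `(x₁ ⋯ xₙ)` in `k[x₁,…,xₙ]`. -/
noncomputable abbrev sncIdeal (k : Type) [Field k] (n : ℕ) : Ideal (MvPolynomial (Fin n) k) :=
  Ideal.span {∏ i : Fin n, (X i : MvPolynomial (Fin n) k)}

/-- The simple normal crossings model `R = k[x₁,…,xₙ]/(x₁⋯xₙ)`. -/
abbrev SNCModel (k : Type) [Field k] (n : ℕ) : Type :=
  MvPolynomial (Fin n) k ⧸ sncIdeal k n

/-- For an algebra `S` over the simple normal crossings model, the ideal `Iᵢ ⊆ S`
generated by the image of `xᵢ`. -/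
def xIdeal (k : Type) [Field k] (n : ℕ) (S : Type) [CommRing S]
    [Algebra (SNCModel k n) S] (i : Fin n) : Ideal S :=
  Ideal.span {algebraMap (SNCModel k n) S (Ideal.Quotient.mk (sncIdeal k n) (X i))}

/-! Base change along a flat algebra commutes with finite intersections of ideals, so the ideals
`Iᵢ = xᵢS` inherit two identities from the polynomial ring `A`: `⋂ᵢ (xᵢ) = (x₁⋯xₙ)`, which becomes
`⋂ᵢ Iᵢ = 0` and gives injectivity, and `⋂_{i ∈ T} ((xᵢ) + (xⱼ)) = (xⱼ) + ⋂_{i ∈ T} (xᵢ)` for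
`j ∉ T` (substitute `xⱼ = 0`), which lets a compatible tuple be lifted to `S` one index at a
time. -/

open TensorProduct

section FlatBaseChange

variable {R S : Type*} [CommRing R] [CommRing S] [Algebra R S]

theorem tmul_eq_zero_of_mem_map {M : Type*} [AddCommGroup M] [Module R M] {I : Ideal R}
    {m : M} (hm : ∀ a ∈ I, a • m = 0) {x : S} (hx : x ∈ I.map (algebraMap R S)) :
    x ⊗ₜ[R] m = 0 := by
  let ψ : S →ₗ[S] S ⊗[R] M := (AlgebraTensorModule.mk R S S M).flip m
  suffices I.map (algebraMap R S) ≤ LinearMap.ker ψ from this hx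
  rw [Ideal.map_le_iff_le_comap]
  intro a ha
  change algebraMap R S a ⊗ₜ[R] m = 0
  rw [Algebra.algebraMap_eq_smul_one, smul_tmul, hm a ha, tmul_zero]

theorem rid_lTensor_subtype_mem_map (K : Ideal R) (v : S ⊗[R] K) :
    AlgebraTensorModule.rid R S S (AlgebraTensorModule.lTensor S S K.subtype v) ∈
      K.map (algebraMap R S) := by
  induction v with
  | zero => simp
  | tmul s a =>
    simpa [Algebra.smul_def] using Ideal.mul_mem_right _ _ (Ideal.mem_map_of_mem _ a.2)
  | add v w hv hw => simpa using add_mem hv hw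

theorem Ideal.map_inf_of_flat [Module.Flat R S] (I J : Ideal R) :
    (I ⊓ J).map (algebraMap R S) = I.map (algebraMap R S) ⊓ J.map (algebraMap R S) := by
  refine le_antisymm (Ideal.map_inf_le _) fun x ⟨hxI, hxJ⟩ => ?_
  -- `I ⊓ J` is the kernel of `R → R/I × R/J`, and flat base change preserves kernels.
  let f := (Submodule.mkQ I).prod (Submodule.mkQ J)
  have hx : x ⊗ₜ[R] (1 : R) ∈ LinearMap.ker (AlgebraTensorModule.lTensor S S f) := by
    have hsplit : f 1 = (Submodule.mkQ I 1, 0) + (0, Submodule.mkQ J 1) := by simp [f]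
    rw [LinearMap.mem_ker, AlgebraTensorModule.lTensor_tmul, hsplit, tmul_add,
      tmul_eq_zero_of_mem_map _ hxI, tmul_eq_zero_of_mem_map _ hxJ, add_zero]
    all_goals
      intro a ha
      simpa [Algebra.smul_def] using Ideal.Quotient.eq_zero_iff_mem.mpr ha
  rw [Module.Flat.ker_lTensor_eq] at hx
  obtain ⟨v, hv⟩ := hx
  have := rid_lTensor_subtype_mem_map (S := S) (LinearMap.ker f) v
  rwa [hv, AlgebraTensorModule.rid_tmul, one_smul, LinearMap.ker_prod, Submodule.ker_mkQ,
    Submodule.ker_mkQ] at this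

end FlatBaseChange

section MapFinsetInf

variable {ι : Type*}

theorem Ideal.map_finsetInf_of_flat {R S : Type*} [CommRing R] [CommRing S] [Algebra R S]
    [Module.Flat R S] (T : Finset ι) (I : ι → Ideal R) :
    (T.inf I).map (algebraMap R S) = T.inf fun i => (I i).map (algebraMap R S) := by
  induction T using Finset.cons_induction with
  | empty => exact Ideal.map_top _
  | cons i T _ ih => rw [Finset.inf_cons, Finset.inf_cons, Ideal.map_inf_of_flat, ih]

variable {A B : Type*} [CommRing A] [CommRing B] {f : A →+* B}

theorem Ideal.map_inf_of_ker_le (hf : Function.Surjective f) {I J : Ideal A}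
    (hI : RingHom.ker f ≤ I) (hJ : RingHom.ker f ≤ J) : (I ⊓ J).map f = I.map f ⊓ J.map f := by
  conv_lhs => rw [← sup_eq_left.mpr hI, ← sup_eq_left.mpr hJ,
    ← Ideal.comap_map_of_surjective' f hf, ← Ideal.comap_map_of_surjective' f hf]
  exact Ideal.map_inf_comap_of_surjective f hf _ _

theorem Ideal.map_finsetInf_of_ker_le (hf : Function.Surjective f) (T : Finset ι)
    (I : ι → Ideal A) (hI : ∀ i ∈ T, RingHom.ker f ≤ I i) :
    (T.inf I).map f = T.inf fun i => (I i).map f := by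
  induction T using Finset.cons_induction with
  | empty => exact Ideal.map_top _
  | cons i T _ ih =>
    rw [Finset.forall_mem_cons] at hI
    rw [Finset.inf_cons, Finset.inf_cons, Ideal.map_inf_of_ker_le hf hI.1 (Finset.le_inf hI.2),
      ih hI.2]

end MapFinsetInf

theorem Ideal.finsetInf_sup_le_of_retraction {A ι F : Type*} [CommRing A] [FunLike F A A]
    [RingHomClass F A A] (φ : F) (J : Ideal A) (K : ι → Ideal A) (T : Finset ι)
    (hφ : ∀ x, x - φ x ∈ J) (hJ : ∀ x ∈ J, φ x = 0) (hK : ∀ i ∈ T, ∀ x ∈ K i, φ x ∈ K i) :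
    T.inf (fun i => K i ⊔ J) ≤ J ⊔ T.inf K := by
  intro x hx
  have hφx : φ x ∈ T.inf K := by
    rw [Submodule.mem_finsetInf] at hx ⊢
    intro i hi
    obtain ⟨a, ha, b, hb, rfl⟩ := Submodule.mem_sup.mp (hx i hi)
    simpa [hJ b hb] using hK i hi a ha
  simpa using Submodule.add_mem_sup (hφ x) hφx

section Gluing

variable {S ι : Type*} [CommRing S] (I : ι → Ideal S)

theorem Ideal.exists_forall_mk_eq_of_compatible
    (hI : ∀ (T : Finset ι) j, j ∉ T → T.inf (fun i => I i ⊔ I j) ≤ I j ⊔ T.inf I)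
    (s : ∀ i, S ⧸ I i)
    (hs : ∀ i j, i ≠ j → Ideal.Quotient.factor le_sup_left (s i) =
      Ideal.Quotient.factor (S := I j) (T := I i ⊔ I j) le_sup_right (s j))
    (T : Finset ι) : ∃ x : S, ∀ i ∈ T, Ideal.Quotient.mk (I i) x = s i := by
  induction T using Finset.cons_induction with
  | empty => exact ⟨0, by simp⟩
  | cons j T hj ih =>
    obtain ⟨x, hx⟩ := ih
    obtain ⟨t, ht⟩ := Ideal.Quotient.mk_surjective (s j)
    have hxt : x - t ∈ T.inf fun i => I i ⊔ I j := by
      refine Submodule.mem_finsetInf.mpr fun i hi => ?_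
      have := hs i j (ne_of_mem_of_not_mem hi hj)
      rwa [← hx i hi, ← ht, Ideal.Quotient.factor_mk, Ideal.Quotient.factor_mk,
        Ideal.Quotient.eq] at this
    obtain ⟨a, ha, b, hb, hab⟩ := Submodule.mem_sup.mp (hI T j hj hxt)
    refine ⟨x - b, (Finset.forall_mem_cons hj _).mpr ⟨?_, fun i hi => ?_⟩⟩
    · rw [show x - b = t + a by rw [← sub_eq_iff_eq_add'.mpr hab.symm]; ring, map_add, ht,
        Ideal.Quotient.eq_zero_iff_mem.mpr ha, add_zero]
    · rw [map_sub, hx i hi,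
        Ideal.Quotient.eq_zero_iff_mem.mpr (Submodule.mem_finsetInf.mp hb i hi), sub_zero]

theorem Ideal.mem_range_pi_mk_iff [Fintype ι]
    (hI : ∀ (T : Finset ι) j, j ∉ T → T.inf (fun i => I i ⊔ I j) ≤ I j ⊔ T.inf I)
    (s : ∀ i, S ⧸ I i) :
    s ∈ Set.range (RingHom.pi fun i => Ideal.Quotient.mk (I i)) ↔
      ∀ i j, i ≠ j → Ideal.Quotient.factor le_sup_left (s i) =
        Ideal.Quotient.factor (S := I j) (T := I i ⊔ I j) le_sup_right (s j) := by
  refine ⟨?_, fun hs => ?_⟩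
  · rintro ⟨x, rfl⟩ i j _
    simp only [RingHom.pi_apply, Ideal.Quotient.factor_mk]
  · obtain ⟨x, hx⟩ := Ideal.exists_forall_mk_eq_of_compatible I hI s hs Finset.univ
    exact ⟨x, funext fun i => hx i (Finset.mem_univ i)⟩

end Gluing

namespace MvPolynomial

variable {σ k : Type*} [Field k]

theorem finsetInf_span_X (T : Finset σ) :
    T.inf (fun i => Ideal.span {(X i : MvPolynomial σ k)}) = Ideal.span {∏ i ∈ T, X i} := by
  ext f
  simp only [Submodule.mem_finsetInf, Ideal.mem_span_singleton]
  refine ⟨Finset.prod_dvd_of_isRelPrime fun i _ j _ hij => ?_,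
    fun h i hi => (Finset.dvd_prod_of_mem _ hi).trans h⟩
  exact X_prime.irreducible.isRelPrime_iff_not_dvd.mpr (X_dvd_X.not.mpr hij)

theorem sub_aeval_update_zero_mem_span_X [DecidableEq σ] (j : σ) (f : MvPolynomial σ k) :
    f - aeval (fun i => if i = j then 0 else X i) f ∈ Ideal.span {(X j : MvPolynomial σ k)} := by
  rw [← Ideal.Quotient.eq, ← Ideal.Quotient.mkₐ_eq_mk k, ← AlgHom.comp_apply]
  congr 1
  refine (algHom_ext fun i => ?_).symm
  by_cases hij : i = j <;> simp [hij]

theorem finsetInf_span_X_sup_le [DecidableEq σ] {T : Finset σ} {j : σ} (hj : j ∉ T) :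
    T.inf (fun i => Ideal.span {(X i : MvPolynomial σ k)} ⊔ Ideal.span {X j}) ≤
      Ideal.span {X j} ⊔ Ideal.span {∏ i ∈ T, X i} := by
  rw [← finsetInf_span_X]
  refine Ideal.finsetInf_sup_le_of_retraction (aeval fun i => if i = j then 0 else X i)
    (Ideal.span {X j}) (fun i => Ideal.span {X i}) T (sub_aeval_update_zero_mem_span_X j) ?_ ?_
  · intro x hx
    obtain ⟨c, rfl⟩ := Ideal.mem_span_singleton'.mp hx
    simp
  · intro i hi x hx
    obtain ⟨c, rfl⟩ := Ideal.mem_span_singleton'.mp hx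
    simp [ne_of_mem_of_not_mem hi hj, Ideal.mem_span_singleton]

end MvPolynomial

section SNC

variable (k : Type) [Field k] (n : ℕ) (S : Type) [CommRing S] [Algebra (SNCModel k n) S]

noncomputable abbrev sncStructureMap : MvPolynomial (Fin n) k →+* S :=
  (algebraMap (SNCModel k n) S).comp (Ideal.Quotient.mk (sncIdeal k n))

variable {k n S}

theorem sncIdeal_le_span_X (i : Fin n) : sncIdeal k n ≤ Ideal.span {X i} :=
  Ideal.span_singleton_le_span_singleton.mpr (Finset.dvd_prod_of_mem _ (Finset.mem_univ i))

theorem xIdeal_eq_map_span_X (i : Fin n) :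
    xIdeal k n S i = (Ideal.span {X i}).map (sncStructureMap k n S) := by
  rw [xIdeal, Ideal.map_span, Set.image_singleton]
  rfl

variable [Module.Flat (SNCModel k n) S]

theorem map_finsetInf_sncStructureMap {ι : Type*} (T : Finset ι)
    (I : ι → Ideal (MvPolynomial (Fin n) k)) (hI : ∀ i ∈ T, sncIdeal k n ≤ I i) :
    (T.inf I).map (sncStructureMap k n S) = T.inf fun i => (I i).map (sncStructureMap k n S) := by
  rw [← Ideal.map_map, Ideal.map_finsetInf_of_ker_le Ideal.Quotient.mk_surjective T I
    (by simpa only [Ideal.mk_ker]), Ideal.map_finsetInf_of_flat]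
  simp only [Ideal.map_map]

theorem finsetInf_xIdeal (T : Finset (Fin n)) :
    T.inf (xIdeal k n S) = (Ideal.span {∏ i ∈ T, X i}).map (sncStructureMap k n S) := by
  rw [show xIdeal k n S = fun i => (Ideal.span {X i}).map (sncStructureMap k n S) from
    funext xIdeal_eq_map_span_X,
    ← map_finsetInf_sncStructureMap T _ fun i _ => sncIdeal_le_span_X i, finsetInf_span_X]

theorem iInf_xIdeal_eq_bot : ⨅ i, xIdeal k n S i = ⊥ := by
  rw [← Finset.inf_univ_eq_iInf, finsetInf_xIdeal, ← Ideal.map_map, Ideal.map_quotient_self,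
    Ideal.map_bot]

theorem finsetInf_xIdeal_sup_le {T : Finset (Fin n)} {j : Fin n} (hj : j ∉ T) :
    T.inf (fun i => xIdeal k n S i ⊔ xIdeal k n S j) ≤
      xIdeal k n S j ⊔ T.inf (xIdeal k n S) := by
  simp only [finsetInf_xIdeal, xIdeal_eq_map_span_X, ← Ideal.map_sup]
  rw [← map_finsetInf_sncStructureMap T _ fun i _ => (sncIdeal_le_span_X i).trans le_sup_left]
  exact Ideal.map_mono (finsetInf_span_X_sup_le hj)

end SNC

theorem statement1_general (k : Type) [Field k] (n : ℕ)
    (S : Type) [CommRing S] [Algebra (SNCModel k n) S] [Module.Flat (SNCModel k n) S] :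
    Function.Injective (Pi.ringHom fun i : Fin n => Ideal.Quotient.mk (xIdeal k n S i)) ∧
      ∀ s : ∀ i : Fin n, S ⧸ xIdeal k n S i,
        (s ∈ Set.range (Pi.ringHom fun i : Fin n => Ideal.Quotient.mk (xIdeal k n S i)) ↔
          ∀ i j : Fin n, i ≠ j →
            Ideal.Quotient.factor (S := xIdeal k n S i) (T := xIdeal k n S i ⊔ xIdeal k n S j)
                le_sup_left (s i) =
              Ideal.Quotient.factor (S := xIdeal k n S j) (T := xIdeal k n S i ⊔ xIdeal k n S j)
                le_sup_right (s j)) :=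
  ⟨(RingHom.injective_iff_ker_eq_bot (RingHom.pi _)).mpr (by
      rw [Ideal.ker_Pi_Quotient_mk, iInf_xIdeal_eq_bot]),
    Ideal.mem_range_pi_mk_iff _ fun _ _ hj => finsetInf_xIdeal_sup_le hj⟩

/-- for `S` flat over the simple normal crossings model, the map
`S → ∏ᵢ S/Iᵢ` is injective with range the compatible tuples, i.e. `(S, Sᵢ, qᵢ)` is
fiber product data. -/
theorem statement1 (k : Type) [Field k] (n : ℕ) (hn : 1 ≤ n)
    (S : Type) [CommRing S] [Algebra (SNCModel k n) S] [Module.Flat (SNCModel k n) S] :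
    Function.Injective (Pi.ringHom fun i : Fin n => Ideal.Quotient.mk (xIdeal k n S i)) ∧
      ∀ s : ∀ i : Fin n, S ⧸ xIdeal k n S i,
        (s ∈ Set.range (Pi.ringHom fun i : Fin n => Ideal.Quotient.mk (xIdeal k n S i)) ↔
          ∀ i j : Fin n, i ≠ j →
            Ideal.Quotient.factor (S := xIdeal k n S i) (T := xIdeal k n S i ⊔ xIdeal k n S j)
                le_sup_left (s i) =
              Ideal.Quotient.factor (S := xIdeal k n S j) (T := xIdeal k n S i ⊔ xIdeal k n S j)
                le_sup_right (s j)) :=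
  statement1_general k n S
end

section
/- The S-linear map M → ∏_{i=1}^{n} M/(IᵢM) induced by the quotient maps is injective, and its range consists exactly of the tuples (m̄ᵢ)ᵢ such that for all i ≠ j the images of m̄ᵢ and m̄ⱼ under the natural maps M/(IᵢM) → M/((Iᵢ+Iⱼ)M) and M/(IⱼM) → M/((Iᵢ+Iⱼ)M) coincide. -/
open MvPolynomial

/-- The natural map `M ⧸ p → M ⧸ q` for submodules `p ≤ q`. -/
def qfactor {S : Type*} [CommRing S] {M : Type*} [AddCommGroup M] [Module S M]
    {p q : Submodule S M} (h : p ≤ q) : (M ⧸ p) →ₗ[S] M ⧸ q :=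
  Submodule.mapQ p q LinearMap.id fun _ hx => h hx

/-!
For `R = k[x₁,…,xₙ]/(x₁⋯xₙ)` and `Iᵢ = (xᵢ)`, the sequence
`0 → R → ∏ᵢ R/Iᵢ → ∏ᵢⱼ R/(Iᵢ + Iⱼ)` is exact. Both halves are statements about monomials,
because a polynomial lies in `(xᵢ)` exactly when no monomial of its support avoids `xᵢ`: a
polynomial in every `(xᵢ)` is divisible by `x₁⋯xₙ`, and a pairwise compatible family `(fᵢ)`
glues to the polynomial whose coefficient at a monomial `m` is that of any `fᵢ` with `mᵢ = 0`.
Since `M` is projective over `S` and `S` is flat over `R`, `M` is flat over `R`; tensoring with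
`M` keeps the sequence exact, and `M ⊗_R R/I ≅ M/IM` turns it into the sequence of the theorem.
-/

open TensorProduct

section QuotPi

variable {R : Type*} [CommRing R] {M : Type*} [AddCommGroup M] [Module R M] {ι : Type*}

def quotPi (N : ι → Submodule R M) : M →ₗ[R] ∀ i, M ⧸ N i :=
  LinearMap.pi fun i => (N i).mkQ

def quotPairDiff (N : ι → Submodule R M) :
    (∀ i, M ⧸ N i) →ₗ[R] ∀ p : ι × ι, M ⧸ (N p.1 ⊔ N p.2) :=
  LinearMap.pi fun p => qfactor le_sup_left ∘ₗ LinearMap.proj p.1 -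
    qfactor le_sup_right ∘ₗ LinearMap.proj p.2

def Submodule.HasGluing (N : ι → Submodule R M) : Prop :=
  ∀ m : ι → M, (∀ i j, m i - m j ∈ N i ⊔ N j) → ∃ x, ∀ i, x - m i ∈ N i

@[simp]
lemma qfactor_mk {p q : Submodule R M} (h : p ≤ q) (x : M) :
    qfactor h (Submodule.Quotient.mk x) = Submodule.Quotient.mk x :=
  rfl

lemma ker_quotPi (N : ι → Submodule R M) : LinearMap.ker (quotPi N) = ⨅ i, N i := by
  simp [quotPi, LinearMap.ker_pi]

lemma quotPairDiff_mk (N : ι → Submodule R M) (m : ι → M) :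
    quotPairDiff N (fun i => Submodule.Quotient.mk (m i)) =
      fun p => Submodule.Quotient.mk (m p.1 - m p.2) :=
  rfl

lemma exists_pi_mk_eq (N : ι → Submodule R M) (y : ∀ i, M ⧸ N i) :
    ∃ m : ι → M, (fun i => Submodule.Quotient.mk (m i)) = y :=
  ⟨fun i => (y i).out, funext fun i => (y i).out_eq⟩

lemma exact_quotPi_iff (N : ι → Submodule R M) :
    Function.Exact (quotPi N) (quotPairDiff N) ↔ Submodule.HasGluing N := by
  constructor
  · intro h m hm
    obtain ⟨x, hx⟩ := (h _).mp (by
      rw [quotPairDiff_mk]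
      exact funext fun p => (Submodule.Quotient.mk_eq_zero _).mpr (hm p.1 p.2))
    exact ⟨x, fun i => (Submodule.Quotient.eq _).mp (congrFun hx i)⟩
  · intro h y
    obtain ⟨m, rfl⟩ := exists_pi_mk_eq N y
    constructor
    · intro hy
      obtain ⟨x, hx⟩ := h m fun i j => by
        rw [quotPairDiff_mk] at hy
        exact (Submodule.Quotient.mk_eq_zero _).mp (congrFun hy (i, j))
      exact ⟨x, funext fun i => (Submodule.Quotient.eq _).mpr (hx i)⟩
    · rintro ⟨x, hx⟩
      rw [← hx]
      ext p
      simp [quotPi, quotPairDiff]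

lemma Submodule.HasGluing.mem_range_quotPi_smul_top_iff {I : ι → Ideal R}
    (h : Submodule.HasGluing fun i => I i • (⊤ : Submodule R M))
    (p : ∀ i, M ⧸ I i • (⊤ : Submodule R M)) :
    p ∈ LinearMap.range (quotPi fun i => I i • (⊤ : Submodule R M)) ↔
      ∀ i j, i ≠ j →
        qfactor (Submodule.smul_mono_left (le_sup_left : I i ≤ I i ⊔ I j)) (p i) =
          qfactor (Submodule.smul_mono_left (le_sup_right : I j ≤ I i ⊔ I j)) (p j) := by
  obtain ⟨m, rfl⟩ := exists_pi_mk_eq _ p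
  constructor
  · rintro ⟨x, hx⟩ i j -
    beta_reduce
    rw [← congrFun hx i, ← congrFun hx j]
    rfl
  · intro hp
    obtain ⟨x, hx⟩ := h m fun i j => by
      rcases eq_or_ne i j with rfl | hij
      · rw [sub_self]
        exact zero_mem _
      · have hij := hp i j hij
        rwa [qfactor_mk, qfactor_mk, Submodule.Quotient.eq, Submodule.sup_smul] at hij
    exact ⟨x, funext fun i => (Submodule.Quotient.eq _).mpr (hx i)⟩

end QuotPi

section TensorQuot

variable {R : Type*} [CommRing R] (M : Type*) [AddCommGroup M] [Module R M]
  {ι : Type*} [Fintype ι] [DecidableEq ι]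

noncomputable def tensorPiQuotEquiv (I : ι → Ideal R) :
    M ⊗[R] (∀ i, R ⧸ I i) ≃ₗ[R] ∀ i, M ⧸ I i • (⊤ : Submodule R M) :=
  piRight R R M (fun i => R ⧸ I i) ≪≫ₗ
    LinearEquiv.piCongrRight fun i => tensorQuotEquivQuotSMul M (I i)

lemma tensorPiQuotEquiv_tmul (I : ι → Ideal R) (m : M) (r : ι → R) :
    tensorPiQuotEquiv M I (m ⊗ₜ fun i => Submodule.Quotient.mk (r i)) =
      fun i => Submodule.Quotient.mk (r i • m) := by
  ext i
  simp only [tensorPiQuotEquiv, LinearEquiv.trans_apply, piRight_apply, piRightHom_tmul,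
    LinearEquiv.piCongrRight_apply]
  exact tensorQuotEquivQuotSMul_tmul_mk (I i) m (r i)

lemma quotPi_smul_top_comp_rid (I : ι → Ideal R) :
    quotPi (fun i => I i • (⊤ : Submodule R M)) ∘ₗ TensorProduct.rid R M =
      tensorPiQuotEquiv M I ∘ₗ (quotPi I).lTensor M := by
  refine TensorProduct.ext' fun m r => ?_
  change quotPi _ (r • m) = tensorPiQuotEquiv M I (m ⊗ₜ fun i => Submodule.Quotient.mk r)
  rw [tensorPiQuotEquiv_tmul]
  rfl

noncomputable def tensorPiQuotPairEquiv (I : ι → Ideal R) :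
    M ⊗[R] (∀ p : ι × ι, R ⧸ (I p.1 ⊔ I p.2)) ≃ₗ[R]
      ∀ p : ι × ι, M ⧸ (I p.1 • (⊤ : Submodule R M) ⊔ I p.2 • ⊤) :=
  tensorPiQuotEquiv M (fun p : ι × ι => I p.1 ⊔ I p.2) ≪≫ₗ
    LinearEquiv.piCongrRight fun p =>
      Submodule.quotEquivOfEq _ _ (Submodule.sup_smul (I p.1) (I p.2) ⊤)

lemma quotPairDiff_smul_top_comp_tensorPiQuotEquiv (I : ι → Ideal R) :
    quotPairDiff (fun i => I i • (⊤ : Submodule R M)) ∘ₗ tensorPiQuotEquiv M I =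
      tensorPiQuotPairEquiv M I ∘ₗ (quotPairDiff I).lTensor M := by
  symm
  refine TensorProduct.ext' fun m y => ?_
  choose r hr using fun i => Submodule.Quotient.mk_surjective (I i) (y i)
  obtain rfl : (fun i => Submodule.Quotient.mk (r i)) = y := funext hr
  simp only [LinearMap.comp_apply, LinearMap.lTensor_tmul, LinearEquiv.coe_coe, quotPairDiff_mk,
    tensorPiQuotPairEquiv, LinearEquiv.trans_apply, tensorPiQuotEquiv_tmul]
  ext p
  simp [sub_smul]

end TensorQuot

section Flat

variable {R : Type*} [CommRing R] (M : Type*) [AddCommGroup M] [Module R M] [Module.Flat R M]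
  {ι : Type*} [Finite ι] {I : ι → Ideal R}

theorem Ideal.iInf_smul_top_eq_bot_of_flat (h : ⨅ i, I i = ⊥) :
    ⨅ i, I i • (⊤ : Submodule R M) = ⊥ := by
  classical
  have := Fintype.ofFinite ι
  have hinj : Function.Injective (quotPi I) := by
    rw [← LinearMap.ker_eq_bot, ker_quotPi, h]
  have hinj' := Module.Flat.lTensor_preserves_injective_linearMap (M := M) _ hinj
  rw [← ker_quotPi, LinearMap.ker_eq_bot]
  refine Function.Injective.of_comp_right (g := TensorProduct.rid R M) ?_
    (LinearEquiv.surjective _)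
  rw [← LinearEquiv.coe_coe, ← LinearMap.coe_comp, quotPi_smul_top_comp_rid]
  exact (tensorPiQuotEquiv M I).injective.comp hinj'

theorem Submodule.HasGluing.smul_top_of_flat (h : Submodule.HasGluing I) :
    Submodule.HasGluing fun i => I i • (⊤ : Submodule R M) := by
  classical
  have := Fintype.ofFinite ι
  rw [← exact_quotPi_iff] at h ⊢
  exact Function.Exact.of_ladder_linearEquiv_of_exact (quotPi_smul_top_comp_rid M I)
    (quotPairDiff_smul_top_comp_tensorPiQuotEquiv M I) (Module.Flat.lTensor_exact M h)

end Flat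

namespace MvPolynomial

variable {σ k : Type*}

section CommSemiring

variable [CommSemiring k]

lemma mem_span_X_singleton_iff {i : σ} {f : MvPolynomial σ k} :
    f ∈ Ideal.span {X i} ↔ ∀ m, m i = 0 → f.coeff m = 0 := by
  rw [← Set.image_singleton, mem_ideal_span_X_image]
  simp only [mem_support_iff, Set.mem_singleton_iff, exists_eq_left]
  exact forall_congr' fun m => not_imp_not

lemma mem_span_X_sup_span_X_iff {i j : σ} {f : MvPolynomial σ k} :
    f ∈ Ideal.span {X i} ⊔ Ideal.span {X j} ↔ ∀ m, m i = 0 → m j = 0 → f.coeff m = 0 := by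
  rw [← Ideal.span_union, ← Set.image_singleton, ← Set.image_singleton, ← Set.image_union,
    mem_ideal_span_X_image]
  simp only [mem_support_iff, Set.singleton_union, Set.mem_insert_iff, Set.mem_singleton_iff,
    exists_eq_or_imp, exists_eq_left]
  exact forall_congr' fun m => by tauto

lemma iInf_span_X_eq_span_prod_X [Fintype σ] :
    ⨅ i, Ideal.span {(X i : MvPolynomial σ k)} = Ideal.span {∏ i, X i} := by
  ext f
  have hprod : (∏ i, X i : MvPolynomial σ k) = monomial (∑ i, Finsupp.single i 1) 1 := by
    rw [monomial_sum_one]; rfl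
  rw [hprod, ← Set.image_singleton (f := fun s => monomial s (1 : k)),
    mem_ideal_span_monomial_image, Submodule.mem_iInf]
  have hdeg : ∀ i, (∑ c, Finsupp.single c 1 : σ →₀ ℕ) i = 1 := by
    classical
    simp [Finsupp.finsetSum_apply, Finsupp.single_apply]
  simp only [mem_span_X_singleton_iff, Set.mem_singleton_iff, exists_eq_left, mem_support_iff,
    Finsupp.le_def, hdeg, Nat.one_le_iff_ne_zero]
  constructor
  · exact fun h m hm i hi => hm (h i m hi)
  · exact fun h i m hi => by_contra fun hm => h m hm i hi

end CommSemiring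

variable [CommRing k] [Fintype σ]

theorem hasGluing_span_X : Submodule.HasGluing fun i => Ideal.span {(X i : MvPolynomial σ k)} := by
  classical
  intro f hf
  have hcompat : ∀ i j m, m i = 0 → m j = 0 → (f i).coeff m = (f j).coeff m := fun i j m hi hj =>
    sub_eq_zero.mp (by rw [← coeff_sub]; exact mem_span_X_sup_span_X_iff.mp (hf i j) m hi hj)
  let c : (σ →₀ ℕ) → k := fun m => if h : ∃ i, m i = 0 then (f h.choose).coeff m else 0
  have hc : ∀ m, c m ≠ 0 → m ∈ Finset.univ.biUnion fun i => (f i).support := fun m hm => by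
    by_cases h : ∃ i, m i = 0
    · simp only [c, dif_pos h] at hm
      exact Finset.mem_biUnion.mpr ⟨_, Finset.mem_univ _, mem_support_iff.mpr hm⟩
    · simp [c, dif_neg h] at hm
  refine ⟨AddMonoidAlgebra.ofCoeff (Finsupp.onFinset _ c hc),
    fun i => mem_span_X_singleton_iff.mpr fun m hm => ?_⟩
  have h : ∃ i, m i = 0 := ⟨i, hm⟩
  rw [coeff_sub, sub_eq_zero]
  exact (dif_pos h : c m = _).trans (hcompat _ _ m h.choose_spec hm)

end MvPolynomial

section Surjective

variable {A B : Type*} [CommRing A] [CommRing B] {f : A →+* B} (hf : Function.Surjective f)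
  {ι : Type*} {I : ι → Ideal A}
include hf

theorem Ideal.map_iInf_of_ker_le (hker : ∀ i, RingHom.ker f ≤ I i) :
    (⨅ i, I i).map f = ⨅ i, (I i).map f := by
  have hcomap : ∀ i, ((I i).map f).comap f = I i := fun i => by
    rw [Ideal.comap_map_of_surjective' f hf, sup_eq_left.mpr (hker i)]
  simpa only [hcomap] using Ideal.map_iInf_comap_of_surjective f hf fun i => (I i).map f

theorem Submodule.HasGluing.map_of_surjective (hker : ∀ i, RingHom.ker f ≤ I i)
    (h : Submodule.HasGluing I) : Submodule.HasGluing fun i => (I i).map f := by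
  intro b hb
  choose a ha using fun i => hf (b i)
  have hcomap : ∀ i j, ((I i ⊔ I j).map f).comap f = I i ⊔ I j := fun i j => by
    rw [Ideal.comap_map_of_surjective' f hf, sup_eq_left.mpr ((hker i).trans le_sup_left)]
  obtain ⟨x, hx⟩ := h a fun i j => by
    rw [← hcomap i j, Ideal.mem_comap, map_sub, ha, ha, Ideal.map_sup]
    exact hb i j
  exact ⟨f x, fun i => by rw [← ha i, ← map_sub]; exact Ideal.mem_map_of_mem f (hx i)⟩

end Surjective

section RestrictScalars

variable (R : Type*) {S M : Type*} [CommRing R] [CommRing S] [Algebra R S]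
  [AddCommGroup M] [Module R M] [Module S M] [IsScalarTower R S M] {ι : Type*}
  {N : ι → Submodule S M}

lemma Submodule.iInf_restrictScalars_eq_bot_iff :
    ⨅ i, (N i).restrictScalars R = ⊥ ↔ ⨅ i, N i = ⊥ := by
  simp only [Submodule.eq_bot_iff, Submodule.mem_iInf, Submodule.restrictScalars_mem]

lemma Submodule.hasGluing_restrictScalars_iff :
    Submodule.HasGluing (fun i => (N i).restrictScalars R) ↔ Submodule.HasGluing N := by
  simp only [Submodule.HasGluing, ← Submodule.restrictScalars_sup, Submodule.restrictScalars_mem]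

end RestrictScalars

section SNCModel

variable (k : Type) [Field k] (n : ℕ)

lemma ker_mk_sncIdeal_le_span_X (i : Fin n) :
    RingHom.ker (Ideal.Quotient.mk (sncIdeal k n)) ≤ Ideal.span {X i} := by
  rw [Ideal.mk_ker]
  exact Ideal.span_singleton_le_span_singleton.mpr (Finset.dvd_prod_of_mem _ (Finset.mem_univ i))

lemma iInf_map_span_X_eq_bot :
    ⨅ i : Fin n, (Ideal.span {X i}).map (Ideal.Quotient.mk (sncIdeal k n)) = ⊥ := by
  rw [← Ideal.map_iInf_of_ker_le Ideal.Quotient.mk_surjective (ker_mk_sncIdeal_le_span_X k n),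
    MvPolynomial.iInf_span_X_eq_span_prod_X, Ideal.map_quotient_self]

lemma hasGluing_map_span_X :
    Submodule.HasGluing fun i : Fin n =>
      (Ideal.span {X i}).map (Ideal.Quotient.mk (sncIdeal k n)) :=
  MvPolynomial.hasGluing_span_X.map_of_surjective Ideal.Quotient.mk_surjective
    (ker_mk_sncIdeal_le_span_X k n)

lemma xIdeal_eq_map (S : Type) [CommRing S] [Algebra (SNCModel k n) S] (i : Fin n) :
    xIdeal k n S i = ((Ideal.span {X i}).map (Ideal.Quotient.mk (sncIdeal k n))).map
      (algebraMap (SNCModel k n) S) := by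
  simp only [xIdeal, Ideal.map_span, Set.image_singleton]

end SNCModel

theorem statement2_general (k : Type) [Field k] (n : ℕ)
    (S : Type) [CommRing S] [Algebra (SNCModel k n) S] [Module.Flat (SNCModel k n) S]
    (M : Type) [AddCommGroup M] [Module S M] [Module.Projective S M] :
    Function.Injective
        (LinearMap.pi fun i : Fin n =>
          Submodule.mkQ (xIdeal k n S i • (⊤ : Submodule S M))) ∧
      ∀ p : ∀ i : Fin n, M ⧸ xIdeal k n S i • (⊤ : Submodule S M),
        (p ∈ LinearMap.range
              (LinearMap.pi fun i : Fin n =>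
                Submodule.mkQ (xIdeal k n S i • (⊤ : Submodule S M))) ↔
          ∀ i j : Fin n, i ≠ j →
            qfactor (Submodule.smul_mono_left
                (le_sup_left : xIdeal k n S i ≤ xIdeal k n S i ⊔ xIdeal k n S j)) (p i) =
              qfactor (Submodule.smul_mono_left
                (le_sup_right : xIdeal k n S j ≤ xIdeal k n S i ⊔ xIdeal k n S j)) (p j)) := by
  let _ : Module (SNCModel k n) M := Module.compHom M (algebraMap (SNCModel k n) S)
  have : IsScalarTower (SNCModel k n) S M := IsScalarTower.of_algebraMap_smul fun _ _ => rfl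
  have : Module.Flat (SNCModel k n) M := Module.Flat.trans (SNCModel k n) S M
  have hres : ∀ i, (xIdeal k n S i • (⊤ : Submodule S M)).restrictScalars (SNCModel k n) =
      (Ideal.span {X i}).map (Ideal.Quotient.mk (sncIdeal k n)) • ⊤ := fun i => by
    rw [xIdeal_eq_map, Ideal.smul_restrictScalars, Submodule.restrictScalars_top]
  have hsep : ⨅ i, xIdeal k n S i • (⊤ : Submodule S M) = ⊥ := by
    rw [← Submodule.iInf_restrictScalars_eq_bot_iff (SNCModel k n)]
    simpa only [hres] using Ideal.iInf_smul_top_eq_bot_of_flat M (iInf_map_span_X_eq_bot k n)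
  have hglue : Submodule.HasGluing fun i => xIdeal k n S i • (⊤ : Submodule S M) := by
    rw [← Submodule.hasGluing_restrictScalars_iff (SNCModel k n)]
    simpa only [hres] using (hasGluing_map_span_X k n).smul_top_of_flat M
  exact ⟨LinearMap.ker_eq_bot.mp ((ker_quotPi _).trans hsep), hglue.mem_range_quotPi_smul_top_iff⟩

/-- for a finite projective module `M` over an algebra `S` flat over the
simple normal crossings model, the map `M → ∏ᵢ M/IᵢM` is injective with range the
compatible tuples. -/
theorem statement2 (k : Type) [Field k] (n : ℕ) (hn : 1 ≤ n)
    (S : Type) [CommRing S] [Algebra (SNCModel k n) S] [Module.Flat (SNCModel k n) S]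
    (M : Type) [AddCommGroup M] [Module S M] [Module.Finite S M] [Module.Projective S M] :
    Function.Injective
        (LinearMap.pi fun i : Fin n =>
          Submodule.mkQ (xIdeal k n S i • (⊤ : Submodule S M))) ∧
      ∀ p : ∀ i : Fin n, M ⧸ xIdeal k n S i • (⊤ : Submodule S M),
        (p ∈ LinearMap.range
              (LinearMap.pi fun i : Fin n =>
                Submodule.mkQ (xIdeal k n S i • (⊤ : Submodule S M))) ↔
          ∀ i j : Fin n, i ≠ j →
            qfactor (Submodule.smul_mono_left
                (le_sup_left : xIdeal k n S i ≤ xIdeal k n S i ⊔ xIdeal k n S j)) (p i) =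
              qfactor (Submodule.smul_mono_left
                (le_sup_right : xIdeal k n S j ≤ xIdeal k n S i ⊔ xIdeal k n S j)) (p j)) :=
  statement2_general k n S M
end

section
/- Assume n ≥ 2. Let Fₙ ⊆ ∏_{i=1}^{n} Sᵢ be the subring of compatible tuples (tuples (sᵢ) whose entries agree pairwise in S_{ij}), and let F = F_{n-1} ⊆ ∏_{i=1}^{n-1} Sᵢ be the subring of compatible tuples in the first n−1 factors; F is an S-algebra via the map s ↦ (qᵢ(s))_{i<n}. Then the map Fₙ → F × Sₙ sending (s₁,…,sₙ) ↦ ((s₁,…,s_{n-1}), sₙ) is an injective ring homomorphism whose range is exactly the set of pairs (f, t) ∈ F × Sₙ such that 1 ⊗ f = t ⊗ 1 in the ring Sₙ ⊗_S F. In other words, the natural maps induce a ring isomorphism S₁ ×_q ⋯ ×_q Sₙ ≅ (S₁ ×_q ⋯ ×_q S_{n-1}) ×_{q'} Sₙ. -/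
set_option maxHeartbeats 1000000
set_option synthInstance.maxHeartbeats 400000

open MvPolynomial TensorProduct

/-- `Ideal.Quotient.factor` as an `S`-algebra homomorphism. -/
def factorAlgHom {S : Type*} [CommRing S] (I J : Ideal S) (h : I ≤ J) :
    (S ⧸ I) →ₐ[S] S ⧸ J :=
  { Ideal.Quotient.factor h with
    commutes' := fun s => by
      simp [Ideal.Quotient.algebraMap_eq, RingHom.toMonoidHom_eq_coe] }

variable (k : Type) [Field k] (n : ℕ) (S : Type) [CommRing S] [Algebra (SNCModel k n) S]

/-- The subalgebra of compatible tuples `(sᵢ)ᵢ` in `∏_{i ∈ ι} S/I_{e i}`: tuples whose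
entries agree pairwise in `S/(I_{e i} + I_{e j})`. -/
def compatAlg {ι : Type} (e : ι → Fin n) :
    Subalgebra S (∀ i : ι, S ⧸ xIdeal k n S (e i)) :=
  ⨅ (i : ι) (j : ι) (_ : i ≠ j),
    AlgHom.equalizer
      ((factorAlgHom (xIdeal k n S (e i)) (xIdeal k n S (e i) ⊔ xIdeal k n S (e j))
          le_sup_left).comp (Pi.evalAlgHom S (fun i : ι => S ⧸ xIdeal k n S (e i)) i))
      ((factorAlgHom (xIdeal k n S (e j)) (xIdeal k n S (e i) ⊔ xIdeal k n S (e j))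
          le_sup_right).comp (Pi.evalAlgHom S (fun i : ι => S ⧸ xIdeal k n S (e i)) j))

variable (m : ℕ) [Algebra (SNCModel k (m + 1)) S]

/-- Restriction of a compatible `(m+1)`-tuple to its first `m` coordinates. -/
noncomputable def restrictAlgHom :
    compatAlg k (m + 1) S (id : Fin (m + 1) → Fin (m + 1)) →ₐ[S]
      compatAlg k (m + 1) S (Fin.castSucc : Fin m → Fin (m + 1)) :=
  AlgHom.codRestrict
    (Pi.algHom S _ fun i : Fin m =>
      (Pi.evalAlgHom S (fun j : Fin (m + 1) => S ⧸ xIdeal k (m + 1) S (id j))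
        i.castSucc).comp
        (compatAlg k (m + 1) S (id : Fin (m + 1) → Fin (m + 1))).val)
    (compatAlg k (m + 1) S (Fin.castSucc : Fin m → Fin (m + 1)))
    (by
      intro x
      have hx := x.2
      simp only [compatAlg, Algebra.mem_iInf] at hx ⊢
      intro i j hij
      have h := hx i.castSucc j.castSucc ((Fin.castSucc_injective m).ne hij)
      rw [AlgHom.mem_equalizer] at h ⊢
      first
        | simpa using h
        | exact h)

/-- Evaluation of a compatible `(m+1)`-tuple at the last coordinate. -/
noncomputable def lastAlgHom :
    compatAlg k (m + 1) S (id : Fin (m + 1) → Fin (m + 1)) →ₐ[S]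
      S ⧸ xIdeal k (m + 1) S (Fin.last m) :=
  (Pi.evalAlgHom S (fun j : Fin (m + 1) => S ⧸ xIdeal k (m + 1) S (id j))
      (Fin.last m)).comp
    (compatAlg k (m + 1) S (id : Fin (m + 1) → Fin (m + 1))).val

/-- The ring homomorphism `S₁ ×_q ⋯ ×_q Sₙ → (S₁ ×_q ⋯ ×_q S_{n-1}) × Sₙ`,
`(s₁,…,sₙ) ↦ ((s₁,…,s_{n-1}), sₙ)`. -/
noncomputable def hierarchicalHom :
    compatAlg k (m + 1) S (id : Fin (m + 1) → Fin (m + 1)) →+*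
      (compatAlg k (m + 1) S (Fin.castSucc : Fin m → Fin (m + 1))) ×
        (S ⧸ xIdeal k (m + 1) S (Fin.last m)) :=
  RingHom.prod (restrictAlgHom k S m).toRingHom (lastAlgHom k S m).toRingHom

/-!
Write `xᵢ` for the image of the `i`-th variable in `S`, and choose lifts `uᵢ` of `f` and `s` of `t`.
The pair `(f, t)` glues to a compatible tuple iff `uᵢ - s ∈ (xᵢ, xₙ)` for all `i < n`. On the other
hand `Sₙ ⊗_S F ≅ F / xₙF`, so `1 ⊗ f = t ⊗ 1` says `f - s = xₙ g` with `g ∈ F`, i.e.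
`uᵢ - s - xₙ dᵢ ∈ (xᵢ)` for compatible lifts `dᵢ` of `g`. The latter clearly implies the former.
Conversely, write `uᵢ - s = cᵢ xᵢ + dᵢ xₙ`; then `xₙ (dᵢ - dⱼ) ∈ (xᵢ, xⱼ)`, and `xₙ` is a
nonzerodivisor modulo `(xᵢ, xⱼ)`: in `R` because `(xᵢ, xⱼ)` is a monomial ideal containing
`x₁ ⋯ xₙ`, and in `S` by flatness. So the `dᵢ` are compatible.
-/

theorem MvPolynomial.mem_ideal_span_X_image_of_X_mul_mem {σ R : Type*} [CommSemiring R]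
    {s : Set σ} {l : σ} (hl : l ∉ s) {p : MvPolynomial σ R}
    (h : X l * p ∈ Ideal.span (X '' s)) : p ∈ Ideal.span (X '' s) := by
  rw [mem_ideal_span_X_image] at h ⊢
  intro μ hμ
  obtain ⟨i, hi, hμi⟩ := h (Finsupp.single l 1 + μ)
    (by rw [support_X_mul]; exact Finset.mem_map_of_mem _ hμ)
  have hil : l ≠ i := fun h => hl (h ▸ hi)
  exact ⟨i, hi, by simpa [Finsupp.single_apply, hil] using hμi⟩

theorem Ideal.Quotient.mem_map_mk_of_mk_mul_mem {A : Type*} [CommRing A] {I J : Ideal A}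
    (hIJ : I ≤ J) {r : A} (hr : ∀ a, r * a ∈ J → a ∈ J) {b : A ⧸ I}
    (h : Ideal.Quotient.mk I r * b ∈ J.map (Ideal.Quotient.mk I)) :
    b ∈ J.map (Ideal.Quotient.mk I) := by
  obtain ⟨a, rfl⟩ := Ideal.Quotient.mk_surjective b
  rw [← map_mul, ← Ideal.mem_comap, Ideal.comap_map_mk hIJ] at h
  rw [← Ideal.mem_comap, Ideal.comap_map_mk hIJ]
  exact hr a h

theorem Ideal.mem_map_of_algebraMap_mul_mem_map {R A : Type*} [CommRing R] [CommRing A]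
    [Algebra R A] [Module.Flat R A] {J : Ideal R} {r : R} (hr : ∀ a, r * a ∈ J → a ∈ J) {s : A}
    (h : algebraMap R A r * s ∈ J.map (algebraMap R A)) : s ∈ J.map (algebraMap R A) := by
  have hreg : IsSMulRegular (R ⧸ J) r := by
    refine IsSMulRegular.of_right_eq_zero_of_smul fun b hb => ?_
    obtain ⟨a, rfl⟩ := Ideal.Quotient.mk_surjective b
    exact Ideal.Quotient.eq_zero_iff_mem.2 (hr a (Ideal.Quotient.eq_zero_iff_mem.1 hb))
  have hregA : IsSMulRegular (A ⧸ J • (⊤ : Submodule R A)) r :=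
    ((TensorProduct.tensorQuotEquivQuotSMul A J).isSMulRegular_congr r).1 (hreg.lTensor A)
  have hs := isSMulRegular_iff_right_eq_zero_of_smul.1 hregA (Submodule.Quotient.mk s) (by
    rw [← Submodule.Quotient.mk_smul, Submodule.Quotient.mk_eq_zero,
      Ideal.smul_top_eq_map, Submodule.restrictScalars_mem, Algebra.smul_def]
    exact h)
  rwa [Submodule.Quotient.mk_eq_zero, Ideal.smul_top_eq_map, Submodule.restrictScalars_mem] at hs

section Compatible

variable {A ι : Type*} [CommRing A]

/-- Lifts `uᵢ` of a tuple in `∏ A/(xᵢ)` that is compatible in every `A/(xᵢ, xⱼ)`. -/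
def IsCompatible (x u : ι → A) : Prop :=
  ∀ i j, i ≠ j → u i - u j ∈ Ideal.span {x i, x j}

theorem isCompatible_snoc_iff {m : ℕ} {x : Fin (m + 1) → A} {u : Fin m → A} {s : A} :
    IsCompatible x (Fin.snoc u s : Fin (m + 1) → A) ↔
      IsCompatible (fun i => x i.castSucc) u ∧
        ∀ i, u i - s ∈ Ideal.span {x i.castSucc, x (Fin.last m)} := by
  have hsymm : ∀ {a b : A} {i j}, a - b ∈ Ideal.span {x i, x j} → b - a ∈ Ideal.span {x j, x i} :=
    fun h => by rwa [← neg_sub, Ideal.neg_mem_iff, Set.pair_comm]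
  constructor
  · intro h
    refine ⟨fun i j hij => ?_, fun i => ?_⟩
    · simpa using h i.castSucc j.castSucc (Fin.castSucc_injective m |>.ne hij)
    · simpa using h i.castSucc (Fin.last m) (Fin.castSucc_lt_last i).ne
  · rintro ⟨hu, hs⟩ a b hab
    induction a using Fin.lastCases with
    | last =>
      induction b using Fin.lastCases with
      | last => exact absurd rfl hab
      | cast j => simpa using hsymm (hs j)
    | cast i =>
      induction b using Fin.lastCases with
      | last => simpa using hs i
      | cast j => simpa using hu i j (fun h => hab (h ▸ rfl))

theorem IsCompatible.exists_of_sub_mem {x u : ι → A} (hu : IsCompatible x u) {y s : A}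
    (hy : ∀ i j, i ≠ j → ∀ a, y * a ∈ Ideal.span {x i, x j} → a ∈ Ideal.span {x i, x j})
    (hs : ∀ i, u i - s ∈ Ideal.span {x i, y}) :
    ∃ d, IsCompatible x d ∧ ∀ i, u i - s - y * d i ∈ Ideal.span {x i} := by
  choose c d hcd using fun i => Ideal.mem_span_pair.1 (hs i)
  refine ⟨d, fun i j hij => hy i j hij _ ?_, fun i => ?_⟩
  · have : y * (d i - d j) = (u i - u j) - (c i * x i - c j * x j) := by
      linear_combination hcd i - hcd j
    rw [this]
    refine sub_mem (hu i j hij) (sub_mem ?_ ?_) <;>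
      exact Ideal.mul_mem_left _ _ (Ideal.subset_span (by simp))
  · exact Ideal.mem_span_singleton'.2 ⟨c i, by linear_combination hcd i⟩

theorem sub_mem_span_pair_of_sub_sub_mul_mem {x y a s d : A}
    (h : a - s - y * d ∈ Ideal.span {x}) : a - s ∈ Ideal.span {x, y} := by
  rw [← sub_add_cancel (a - s) (y * d)]
  exact add_mem (Ideal.span_mono (by simp) h)
    (Ideal.mul_mem_right _ _ (Ideal.subset_span (by simp)))

end Compatible

theorem TensorProduct.one_tmul_eq_mk_tmul_iff {A M : Type*} [CommRing A] [AddCommGroup M]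
    [Module A M] (I : Ideal A) (a : M) (s : A) (b : M) :
    (1 : A ⧸ I) ⊗ₜ[A] a = Ideal.Quotient.mk I s ⊗ₜ[A] b ↔ a - s • b ∈ I • (⊤ : Submodule A M) := by
  rw [← (quotTensorEquivQuotSMul M I).injective.eq_iff, ← map_one (Ideal.Quotient.mk I),
    quotTensorEquivQuotSMul_mk_tmul, quotTensorEquivQuotSMul_mk_tmul, one_smul,
    Submodule.Quotient.eq]

theorem Ideal.Quotient.exists_pi_mk_eq {A ι : Type*} [CommRing A] {I : ι → Ideal A}
    (f : ∀ i, A ⧸ I i) : ∃ u : ι → A, (fun i => Ideal.Quotient.mk (I i) (u i)) = f :=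
  Function.Surjective.piMap (fun _ => Ideal.Quotient.mk_surjective) f

theorem factorAlgHom_mk {A : Type*} [CommRing A] {I J : Ideal A} (h : I ≤ J) (a : A) :
    factorAlgHom I J h (Ideal.Quotient.mk I a) = Ideal.Quotient.mk J a := rfl

noncomputable abbrev sncVar (i : Fin n) : S :=
  algebraMap (SNCModel k n) S (Ideal.Quotient.mk (sncIdeal k n) (X i))

theorem xIdeal_sup_xIdeal (i j : Fin n) :
    xIdeal k n S i ⊔ xIdeal k n S j = Ideal.span {sncVar k n S i, sncVar k n S j} :=
  (Ideal.span_insert _ _).symm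

theorem SNCModel.mem_span_pair_of_mul_mem {k : Type} [Field k] {n : ℕ} {i j l : Fin n}
    (hli : l ≠ i) (hlj : l ≠ j) {a : SNCModel k n}
    (h : Ideal.Quotient.mk (sncIdeal k n) (X l) * a ∈
      Ideal.span {Ideal.Quotient.mk (sncIdeal k n) (X i), Ideal.Quotient.mk (sncIdeal k n) (X j)}) :
    a ∈ Ideal.span {Ideal.Quotient.mk (sncIdeal k n) (X i),
      Ideal.Quotient.mk (sncIdeal k n) (X j)} := by
  have hspan : Ideal.span {Ideal.Quotient.mk (sncIdeal k n) (X i),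
      Ideal.Quotient.mk (sncIdeal k n) (X j)} =
      (Ideal.span (X '' {i, j})).map (Ideal.Quotient.mk (sncIdeal k n)) := by
    rw [Ideal.map_span, Set.image_image, Set.image_pair]
  have hle : sncIdeal k n ≤ Ideal.span (X '' {i, j}) := by
    rw [Ideal.span_singleton_le_iff_mem]
    exact Ideal.mem_of_dvd _ (Finset.dvd_prod_of_mem _ (Finset.mem_univ i))
      (Ideal.subset_span ⟨i, by simp, rfl⟩)
  rw [hspan] at h ⊢
  refine Ideal.Quotient.mem_map_mk_of_mk_mul_mem hle (fun a ha => ?_) h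
  exact MvPolynomial.mem_ideal_span_X_image_of_X_mul_mem (by simp [hli, hlj]) ha

theorem mem_span_pair_of_sncVar_mul_mem [Module.Flat (SNCModel k n) S] {i j l : Fin n}
    (hli : l ≠ i) (hlj : l ≠ j) {s : S}
    (h : sncVar k n S l * s ∈ Ideal.span {sncVar k n S i, sncVar k n S j}) :
    s ∈ Ideal.span {sncVar k n S i, sncVar k n S j} := by
  have hspan : Ideal.span {sncVar k n S i, sncVar k n S j} =
      (Ideal.span {Ideal.Quotient.mk (sncIdeal k n) (X i),
        Ideal.Quotient.mk (sncIdeal k n) (X j)}).map (algebraMap (SNCModel k n) S) := by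
    rw [Ideal.map_span, Set.image_pair]
  rw [hspan] at h ⊢
  exact Ideal.mem_map_of_algebraMap_mul_mem_map
    (fun a => SNCModel.mem_span_pair_of_mul_mem hli hlj) h

theorem mk_mem_compatAlg_iff {ι : Type} (e : ι → Fin n) (u : ι → S) :
    (fun i => Ideal.Quotient.mk (xIdeal k n S (e i)) (u i)) ∈ compatAlg k n S e ↔
      IsCompatible (fun i => sncVar k n S (e i)) u := by
  simp only [compatAlg, Algebra.mem_iInf, AlgHom.mem_equalizer, AlgHom.comp_apply,
    Pi.evalAlgHom_apply, factorAlgHom_mk, Ideal.Quotient.eq, xIdeal_sup_xIdeal]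
  rfl

theorem sub_smul_one_mem_span_smul_top_iff {ι : Type} (e : ι → Fin n) (f : compatAlg k n S e)
    {u : ι → S} (hu : (fun i => Ideal.Quotient.mk (xIdeal k n S (e i)) (u i)) = f.1) (y s : S) :
    f - s • 1 ∈ Ideal.span {y} • (⊤ : Submodule S (compatAlg k n S e)) ↔
      ∃ d, IsCompatible (fun i => sncVar k n S (e i)) d ∧
        ∀ i, u i - s - y * d i ∈ xIdeal k n S (e i) := by
  have key : ∀ (g : compatAlg k n S e) (d : ι → S),
      (fun i => Ideal.Quotient.mk (xIdeal k n S (e i)) (d i)) = g.1 →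
        (y • g = f - s • 1 ↔ ∀ i, u i - s - y * d i ∈ xIdeal k n S (e i)) := by
    intro g d hd
    rw [Subtype.ext_iff, funext_iff]
    refine forall_congr' fun i => ?_
    simp only [SetLike.val_smul, AddSubgroupClass.coe_sub, OneMemClass.coe_one, ← hd, ← hu,
      Pi.smul_apply, Pi.sub_apply, Pi.one_apply]
    rw [Algebra.smul_def, Algebra.smul_def, mul_one, Ideal.Quotient.algebraMap_eq,
      ← map_mul, ← map_sub, eq_comm, Ideal.Quotient.eq]
  rw [Submodule.ideal_span_singleton_smul, Submodule.mem_smul_pointwise_iff_exists]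
  constructor
  · rintro ⟨g, -, hg⟩
    obtain ⟨d, hd⟩ := Ideal.Quotient.exists_pi_mk_eq g.1
    exact ⟨d, (mk_mem_compatAlg_iff k n S e d).1 (hd ▸ g.2), (key g d hd).1 hg⟩
  · rintro ⟨d, hd, hdiv⟩
    exact ⟨⟨_, (mk_mem_compatAlg_iff k n S e d).2 hd⟩, trivial, (key _ d rfl).2 hdiv⟩

theorem hierarchicalHom_eq_iff (x : compatAlg k (m + 1) S (id : Fin (m + 1) → Fin (m + 1)))
    (p : compatAlg k (m + 1) S (Fin.castSucc : Fin m → Fin (m + 1)) ×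
      (S ⧸ xIdeal k (m + 1) S (Fin.last m))) :
    hierarchicalHom k S m x = p ↔ (∀ i, x.1 i.castSucc = p.1.1 i) ∧ x.1 (Fin.last m) = p.2 := by
  simp [Prod.ext_iff, Subtype.ext_iff, funext_iff, hierarchicalHom, restrictAlgHom, lastAlgHom]

theorem hierarchicalHom_injective : Function.Injective (hierarchicalHom k S m) := by
  intro x y hxy
  obtain ⟨hcast, hlast⟩ := (hierarchicalHom_eq_iff k S m x _).1 hxy
  refine Subtype.ext (funext fun j => ?_)
  induction j using Fin.lastCases with
  | last => exact hlast
  | cast i => exact hcast i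

theorem mem_range_hierarchicalHom_iff
    (p : compatAlg k (m + 1) S (Fin.castSucc : Fin m → Fin (m + 1)) ×
      (S ⧸ xIdeal k (m + 1) S (Fin.last m))) {u : Fin m → S}
    (hu : (fun i => Ideal.Quotient.mk (xIdeal k (m + 1) S i.castSucc) (u i)) = p.1.1) {s : S}
    (hs : Ideal.Quotient.mk (xIdeal k (m + 1) S (Fin.last m)) s = p.2) :
    p ∈ Set.range (hierarchicalHom k S m) ↔
      ∀ i, u i - s ∈
        Ideal.span {sncVar k (m + 1) S i.castSucc, sncVar k (m + 1) S (Fin.last m)} := by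
  have hglue : ∀ x, hierarchicalHom k S m x = p ↔
      x.1 = fun j =>
        Ideal.Quotient.mk (xIdeal k (m + 1) S j) ((Fin.snoc u s : Fin (m + 1) → S) j) := by
    intro x
    rw [hierarchicalHom_eq_iff, funext_iff, Fin.forall_fin_succ']
    simp [← hu, ← hs]
  have hcompat := (mk_mem_compatAlg_iff k (m + 1) S _ u).1 (hu ▸ p.1.2)
  constructor
  · rintro ⟨x, hx⟩
    have hx' := (hglue x).1 hx ▸ x.2
    exact (isCompatible_snoc_iff.1 ((mk_mem_compatAlg_iff k (m + 1) S id _).1 hx')).2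
  · intro h
    have hmem := (mk_mem_compatAlg_iff k (m + 1) S id _).2 (isCompatible_snoc_iff.2 ⟨hcompat, h⟩)
    exact ⟨⟨_, hmem⟩, (hglue _).2 rfl⟩

theorem statement3_general (k : Type) [Field k] (m : ℕ)
    (S : Type) [CommRing S] [Algebra (SNCModel k (m + 1)) S]
    [Module.Flat (SNCModel k (m + 1)) S] :
    Function.Injective (hierarchicalHom k S m) ∧
      ∀ p : (compatAlg k (m + 1) S (Fin.castSucc : Fin m → Fin (m + 1))) ×
          (S ⧸ xIdeal k (m + 1) S (Fin.last m)),
        (p ∈ Set.range (hierarchicalHom k S m) ↔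
          (1 : S ⧸ xIdeal k (m + 1) S (Fin.last m)) ⊗ₜ[S] p.1 =
            p.2 ⊗ₜ[S] (1 : compatAlg k (m + 1) S (Fin.castSucc : Fin m → Fin (m + 1)))) := by
  refine ⟨hierarchicalHom_injective k S m, fun p => ?_⟩
  obtain ⟨u, hu⟩ := Ideal.Quotient.exists_pi_mk_eq p.1.1
  obtain ⟨s, hs⟩ := Ideal.Quotient.mk_surjective p.2
  have hcompat := (mk_mem_compatAlg_iff k (m + 1) S _ u).1 (hu ▸ p.1.2)
  have hregular : ∀ i j : Fin m, i ≠ j → ∀ a, sncVar k (m + 1) S (Fin.last m) * a ∈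
      Ideal.span {sncVar k (m + 1) S i.castSucc, sncVar k (m + 1) S j.castSucc} →
      a ∈ Ideal.span {sncVar k (m + 1) S i.castSucc, sncVar k (m + 1) S j.castSucc} :=
    fun i j _ _ => mem_span_pair_of_sncVar_mul_mem k (m + 1) S
      (Fin.castSucc_lt_last i).ne' (Fin.castSucc_lt_last j).ne'
  calc p ∈ Set.range (hierarchicalHom k S m)
      ↔ ∀ i, u i - s ∈
          Ideal.span {sncVar k (m + 1) S i.castSucc, sncVar k (m + 1) S (Fin.last m)} :=
        mem_range_hierarchicalHom_iff k S m p hu hs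
    _ ↔ ∃ d, IsCompatible (fun i : Fin m => sncVar k (m + 1) S i.castSucc) d ∧
          ∀ i, u i - s - sncVar k (m + 1) S (Fin.last m) * d i ∈ xIdeal k (m + 1) S i.castSucc :=
        ⟨hcompat.exists_of_sub_mem hregular,
          fun ⟨_, _, hd⟩ i => sub_mem_span_pair_of_sub_sub_mul_mem (hd i)⟩
    _ ↔ p.1 - s • 1 ∈ xIdeal k (m + 1) S (Fin.last m) •
          (⊤ : Submodule S (compatAlg k (m + 1) S (Fin.castSucc : Fin m → Fin (m + 1)))) :=
        (sub_smul_one_mem_span_smul_top_iff k (m + 1) S _ p.1 hu _ s).symm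
    _ ↔ _ := by
        rw [← hs]
        exact (TensorProduct.one_tmul_eq_mk_tmul_iff _ _ _ _).symm

/-- the map `Fₙ → F × Sₙ` is an injective ring homomorphism whose range is
exactly the pairs `(f, t)` with `1 ⊗ f = t ⊗ 1` in `Sₙ ⊗_S F`; i.e.
`S₁ ×_q ⋯ ×_q Sₙ ≅ (S₁ ×_q ⋯ ×_q S_{n-1}) ×_{q'} Sₙ`. -/
theorem statement3 (k : Type) [Field k] (m : ℕ) (hm : 1 ≤ m)
    (S : Type) [CommRing S] [Algebra (SNCModel k (m + 1)) S]
    [Module.Flat (SNCModel k (m + 1)) S] :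
    Function.Injective (hierarchicalHom k S m) ∧
      ∀ p : (compatAlg k (m + 1) S (Fin.castSucc : Fin m → Fin (m + 1))) ×
          (S ⧸ xIdeal k (m + 1) S (Fin.last m)),
        (p ∈ Set.range (hierarchicalHom k S m) ↔
          (1 : S ⧸ xIdeal k (m + 1) S (Fin.last m)) ⊗ₜ[S] p.1 =
            p.2 ⊗ₜ[S] (1 : compatAlg k (m + 1) S (Fin.castSucc : Fin m → Fin (m + 1)))) :=
  statement3_general k m S
end

section
/- Let A : C_Σ → D_Σ be a functor between categories over Σ such that: (1) for every vertex v of Σ, the functor A_v : C_v → D_v is an equivalence of categories; (2) for every edge e of Σ, the functor A_e : C_e → D_e is fully faithful; and (3) for every 2-dimensional face F of Σ, the functor A_F : C_F → D_F is faithful. Then the induced functor between descent categories A : C(Σ) → D(Σ) is an equivalence of categories. -/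
set_option maxHeartbeats 1000000
set_option synthInstance.maxHeartbeats 400000

open CategoryTheory

universe w v u v' u'

variable {V : Type w} [DecidableEq V]

/-- A face of a simplicial complex `K` on the vertex set `V`. -/
abbrev Face (K : Set (Finset V)) : Type w := {F : Finset V // F ∈ K}

lemma subPairL (v w : V) : ({v} : Finset V) ⊆ {v, w} := by
  intro x hx
  simp only [Finset.mem_singleton] at hx
  simp [hx]

lemma subPairR (v w : V) : ({w} : Finset V) ⊆ {v, w} := by
  intro x hx
  simp only [Finset.mem_singleton] at hx
  simp [hx]

lemma subTripU (u v w : V) : ({u} : Finset V) ⊆ {u, v, w} := by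
  intro x hx
  simp only [Finset.mem_singleton] at hx
  simp [hx]

lemma subTripUV (u v w : V) : ({u, v} : Finset V) ⊆ {u, v, w} := by
  intro x hx
  simp only [Finset.mem_insert, Finset.mem_singleton] at hx ⊢
  tauto

lemma subTripVW (u v w : V) : ({v, w} : Finset V) ⊆ {u, v, w} := by
  intro x hx
  simp only [Finset.mem_insert, Finset.mem_singleton] at hx ⊢
  tauto

lemma subTripUW (u v w : V) : ({u, w} : Finset V) ⊆ {u, v, w} := by
  intro x hx
  simp only [Finset.mem_insert, Finset.mem_singleton] at hx ⊢
  tauto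

/-- A (neutral Tannakian-style) category over a simplicial complex `K`: a category `C F`
for each face `F ∈ K` and a transition functor for each inclusion of faces, strictly
functorial. -/
structure CatOver (K : Set (Finset V)) where
  /-- the category attached to a face -/
  C : Face K → Type u
  /-- category instances -/
  inst : ∀ F, Category.{v} (C F)
  /-- transition functors -/
  tr : ∀ (F₁ F₂ : Face K), F₁.1 ⊆ F₂.1 → (C F₁ ⥤ C F₂)
  tr_id : ∀ F : Face K, tr F F (subset_refl _) = 𝟭 (C F)
  tr_comp : ∀ (F₁ F₂ F₃ : Face K) (h₁₂ : F₁.1 ⊆ F₂.1) (h₂₃ : F₂.1 ⊆ F₃.1),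
    tr F₁ F₃ (h₁₂.trans h₂₃) = tr F₁ F₂ h₁₂ ⋙ tr F₂ F₃ h₂₃

attribute [instance] CatOver.inst

variable {K : Set (Finset V)}

/-- An object of the descent category attached to a category over `K`: objects `ξ v` over
the vertices, compatible gluing isomorphisms `φ_{vw}` over the edges, satisfying
`φ_{wv} = φ_{vw}⁻¹` and the cocycle condition over the 2-faces. -/
structure DescentObj (D : CatOver.{w, v, u} K) where
  /-- the object over each vertex -/
  ξ : ∀ (v : V) (hv : ({v} : Finset V) ∈ K), D.C ⟨{v}, hv⟩
  /-- the gluing isomorphism over each (directed) edge -/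
  φ : ∀ (v w : V) (_ : v ≠ w) (hv : ({v} : Finset V) ∈ K) (hw : ({w} : Finset V) ∈ K)
    (he : ({v, w} : Finset V) ∈ K),
    (D.tr ⟨{v}, hv⟩ ⟨{v, w}, he⟩ (subPairL v w)).obj (ξ v hv) ≅
      (D.tr ⟨{w}, hw⟩ ⟨{v, w}, he⟩ (subPairR v w)).obj (ξ w hw)
  φ_symm : ∀ (v w : V) (hvw : v ≠ w) (hv : ({v} : Finset V) ∈ K)
    (hw : ({w} : Finset V) ∈ K) (he : ({v, w} : Finset V) ∈ K)
    (he' : ({w, v} : Finset V) ∈ K),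
    HEq (φ w v hvw.symm hw hv he') (φ v w hvw hv hw he).symm
  cocycle : ∀ (u v w : V) (huv : u ≠ v) (hvw : v ≠ w) (huw : u ≠ w)
    (hu : ({u} : Finset V) ∈ K) (hv : ({v} : Finset V) ∈ K) (hw : ({w} : Finset V) ∈ K)
    (heuv : ({u, v} : Finset V) ∈ K) (hevw : ({v, w} : Finset V) ∈ K)
    (heuw : ({u, w} : Finset V) ∈ K) (hF : ({u, v, w} : Finset V) ∈ K),
    eqToIso (Functor.congr_obj
        (D.tr_comp ⟨{u}, hu⟩ ⟨{u, w}, heuw⟩ ⟨{u, v, w}, hF⟩ (subPairL u w)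
          (subTripUW u v w)) (ξ u hu)) ≪≫
      (D.tr ⟨{u, w}, heuw⟩ ⟨{u, v, w}, hF⟩ (subTripUW u v w)).mapIso
        (φ u w huw hu hw heuw) ≪≫
      (eqToIso (Functor.congr_obj
        (D.tr_comp ⟨{w}, hw⟩ ⟨{u, w}, heuw⟩ ⟨{u, v, w}, hF⟩ (subPairR u w)
          (subTripUW u v w)) (ξ w hw))).symm =
    (eqToIso (Functor.congr_obj
        (D.tr_comp ⟨{u}, hu⟩ ⟨{u, v}, heuv⟩ ⟨{u, v, w}, hF⟩ (subPairL u v)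
          (subTripUV u v w)) (ξ u hu)) ≪≫
      (D.tr ⟨{u, v}, heuv⟩ ⟨{u, v, w}, hF⟩ (subTripUV u v w)).mapIso
        (φ u v huv hu hv heuv) ≪≫
      (eqToIso (Functor.congr_obj
        (D.tr_comp ⟨{v}, hv⟩ ⟨{u, v}, heuv⟩ ⟨{u, v, w}, hF⟩ (subPairR u v)
          (subTripUV u v w)) (ξ v hv))).symm) ≪≫
    (eqToIso (Functor.congr_obj
        (D.tr_comp ⟨{v}, hv⟩ ⟨{v, w}, hevw⟩ ⟨{u, v, w}, hF⟩ (subPairL v w)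
          (subTripVW u v w)) (ξ v hv)) ≪≫
      (D.tr ⟨{v, w}, hevw⟩ ⟨{u, v, w}, hF⟩ (subTripVW u v w)).mapIso
        (φ v w hvw hv hw hevw) ≪≫
      (eqToIso (Functor.congr_obj
        (D.tr_comp ⟨{w}, hw⟩ ⟨{v, w}, hevw⟩ ⟨{u, v, w}, hF⟩ (subPairR v w)
          (subTripVW u v w)) (ξ w hw))).symm)

/-- A morphism in the descent category: a compatible family of morphisms over the
vertices. -/
@[ext]
structure DescentHom {D : CatOver.{w, v, u} K} (X Y : DescentObj D) where
  /-- the component over each vertex -/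
  ψ : ∀ (v : V) (hv : ({v} : Finset V) ∈ K), X.ξ v hv ⟶ Y.ξ v hv
  comm : ∀ (v w : V) (hvw : v ≠ w) (hv : ({v} : Finset V) ∈ K)
    (hw : ({w} : Finset V) ∈ K) (he : ({v, w} : Finset V) ∈ K),
    (X.φ v w hvw hv hw he).hom ≫
        (D.tr ⟨{w}, hw⟩ ⟨{v, w}, he⟩ (subPairR v w)).map (ψ w hw) =
      (D.tr ⟨{v}, hv⟩ ⟨{v, w}, he⟩ (subPairL v w)).map (ψ v hv) ≫
        (Y.φ v w hvw hv hw he).hom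

/-- The descent category attached to a category over the simplicial complex `K`. -/
instance DescentObj.category (D : CatOver.{w, v, u} K) : Category (DescentObj D) where
  Hom X Y := DescentHom X Y
  id X :=
    { ψ := fun v hv => 𝟙 (X.ξ v hv)
      comm := by intros; simp }
  comp {X Y Z} f g :=
    { ψ := fun v hv => f.ψ v hv ≫ g.ψ v hv
      comm := by
        intro v w hvw hv hw he
        rw [Functor.map_comp, Functor.map_comp, ← Category.assoc, f.comm, Category.assoc,
          g.comm v w hvw hv hw he, ← Category.assoc] }
  id_comp f := by
    apply DescentHom.ext
    funext v hv
    exact Category.id_comp _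
  comp_id f := by
    apply DescentHom.ext
    funext v hv
    exact Category.comp_id _
  assoc f g h := by
    apply DescentHom.ext
    funext v hv
    exact Category.assoc _ _ _

section Induced

variable (D : CatOver.{w, v, u} K) (E : CatOver.{w, v', u'} K)
variable (A : ∀ F : Face K, D.C F ⥤ E.C F)

/-- The property that a functor `A' : C(Σ) ⥤ D(Σ)` between descent categories is the one
induced componentwise by a family of functors `A_F : C_F ⥤ D_F` commuting with the
transition functors. -/
def IsInduced (A' : DescentObj D ⥤ DescentObj E) : Prop :=
  (∀ (X : DescentObj D) (x : V) (hx : ({x} : Finset V) ∈ K),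
      (A'.obj X).ξ x hx = (A ⟨{x}, hx⟩).obj (X.ξ x hx)) ∧
  (∀ (X : DescentObj D) (x y : V) (hxy : x ≠ y) (hx : ({x} : Finset V) ∈ K)
      (hy : ({y} : Finset V) ∈ K) (he : ({x, y} : Finset V) ∈ K),
      HEq ((A'.obj X).φ x y hxy hx hy he)
        ((A ⟨{x, y}, he⟩).mapIso (X.φ x y hxy hx hy he))) ∧
  (∀ (X Y : DescentObj D) (f : X ⟶ Y) (x : V) (hx : ({x} : Finset V) ∈ K),
      HEq (DescentHom.ψ (A'.map f) x hx) ((A ⟨{x}, hx⟩).map (DescentHom.ψ f x hx)))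

end Induced

/-!
All functors induced by `A` coincide, so it is enough to study one of them. It is faithful
because every `A_v` is. It is full because the vertexwise preimages of a morphism of descent
data are compatible with the gluing isomorphisms: that compatibility holds after applying the
faithful `A_e`. For essential surjectivity, choose preimages of the vertex objects along the
`A_v`; the gluing isomorphisms, conjugated by the chosen isomorphisms, lift uniquely through
the fully faithful `A_e`, and the lifts satisfy the cocycle condition on a 2-face `F` because
their images under the faithful `A_F` do.
-/

section Transport

variable {V : Type w} {K : Set (Finset V)}

lemma heq_eqToIso_trans_trans {C : Type*} [Category C] {X X' Y Y' : C} (h₁ : X' = X)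
    (h₂ : Y = Y') (i : X ≅ Y) : HEq (eqToIso h₁ ≪≫ i ≪≫ eqToIso h₂) i := by
  subst h₁ h₂
  simp

def IsFunctorOver (D : CatOver.{w, v, u} K) (E : CatOver.{w, v', u'} K)
    (A : ∀ F : Face K, D.C F ⥤ E.C F) : Prop :=
  ∀ (F₁ F₂ : Face K) (h : F₁.1 ⊆ F₂.1), D.tr F₁ F₂ h ⋙ A F₂ = A F₁ ⋙ E.tr F₁ F₂ h

namespace CatOver

variable (D : CatOver.{w, v, u} K)

/-- The cocycle condition of descent data reads
`trIso φ_uw = trIso φ_uv ≪≫ trIso φ_vw` (see `DescentObj.trIso_cocycle`). -/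
def trIso {F₁ F₂ e F : Face K} (h₁ : F₁.1 ⊆ e.1) (h₂ : F₂.1 ⊆ e.1) (he : e.1 ⊆ F.1)
    {X₁ : D.C F₁} {X₂ : D.C F₂} (φ : (D.tr F₁ e h₁).obj X₁ ≅ (D.tr F₂ e h₂).obj X₂) :
    (D.tr F₁ F (h₁.trans he)).obj X₁ ≅ (D.tr F₂ F (h₂.trans he)).obj X₂ :=
  eqToIso (Functor.congr_obj (D.tr_comp F₁ e F h₁ he) X₁) ≪≫ (D.tr e F he).mapIso φ ≪≫
    (eqToIso (Functor.congr_obj (D.tr_comp F₂ e F h₂ he) X₂)).symm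

def conjTrIso {F₁ F₂ e : Face K} (h₁ : F₁.1 ⊆ e.1) (h₂ : F₂.1 ⊆ e.1)
    {X₁ Y₁ : D.C F₁} {X₂ Y₂ : D.C F₂} (θ₁ : X₁ ≅ Y₁) (θ₂ : X₂ ≅ Y₂)
    (ψ : (D.tr F₁ e h₁).obj Y₁ ≅ (D.tr F₂ e h₂).obj Y₂) :
    (D.tr F₁ e h₁).obj X₁ ≅ (D.tr F₂ e h₂).obj X₂ :=
  (D.tr F₁ e h₁).mapIso θ₁ ≪≫ ψ ≪≫ ((D.tr F₂ e h₂).mapIso θ₂).symm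

variable {D} {F₁ F₂ F₃ e F : Face K} (h₁ : F₁.1 ⊆ e.1) (h₂ : F₂.1 ⊆ e.1) (h₃ : F₃.1 ⊆ e.1)
  {X₁ Y₁ : D.C F₁} {X₂ Y₂ : D.C F₂} {X₃ Y₃ : D.C F₃}
  (θ₁ : X₁ ≅ Y₁) (θ₂ : X₂ ≅ Y₂) (θ₃ : X₃ ≅ Y₃)

lemma conjTrIso_symm (ψ : (D.tr F₁ e h₁).obj Y₁ ≅ (D.tr F₂ e h₂).obj Y₂) :
    D.conjTrIso h₂ h₁ θ₂ θ₁ ψ.symm = (D.conjTrIso h₁ h₂ θ₁ θ₂ ψ).symm := by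
  ext
  simp [conjTrIso]

lemma conjTrIso_trans (ψ : (D.tr F₁ e h₁).obj Y₁ ≅ (D.tr F₂ e h₂).obj Y₂)
    (ψ' : (D.tr F₂ e h₂).obj Y₂ ≅ (D.tr F₃ e h₃).obj Y₃) :
    D.conjTrIso h₁ h₂ θ₁ θ₂ ψ ≪≫ D.conjTrIso h₂ h₃ θ₂ θ₃ ψ' =
      D.conjTrIso h₁ h₃ θ₁ θ₃ (ψ ≪≫ ψ') := by
  ext
  simp [conjTrIso]

lemma tr_map_tr_map (he : e.1 ⊆ F.1) {X Y : D.C F₁} (f : X ⟶ Y) :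
    (D.tr e F he).map ((D.tr F₁ e h₁).map f) =
      eqToHom (Functor.congr_obj (D.tr_comp F₁ e F h₁ he) X).symm ≫
        (D.tr F₁ F (h₁.trans he)).map f ≫
        eqToHom (Functor.congr_obj (D.tr_comp F₁ e F h₁ he) Y) := by
  simpa using Functor.congr_hom (D.tr_comp F₁ e F h₁ he).symm f

lemma trIso_conjTrIso (he : e.1 ⊆ F.1) (ψ : (D.tr F₁ e h₁).obj Y₁ ≅ (D.tr F₂ e h₂).obj Y₂) :
    D.trIso h₁ h₂ he (D.conjTrIso h₁ h₂ θ₁ θ₂ ψ) =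
      D.conjTrIso (h₁.trans he) (h₂.trans he) θ₁ θ₂ (D.trIso h₁ h₂ he ψ) := by
  ext
  simp [trIso, conjTrIso, tr_map_tr_map]

end CatOver

namespace IsFunctorOver

variable {D : CatOver.{w, v, u} K} {E : CatOver.{w, v', u'} K} {A : ∀ F : Face K, D.C F ⥤ E.C F}
  (hA : IsFunctorOver D E A)
  {F₁ F₂ F₃ e F : Face K} (h₁ : F₁.1 ⊆ e.1) (h₂ : F₂.1 ⊆ e.1) (h₃ : F₃.1 ⊆ e.1)
  {X₁ : D.C F₁} {X₂ : D.C F₂} {X₃ : D.C F₃}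

def mapTrIso (φ : (D.tr F₁ e h₁).obj X₁ ≅ (D.tr F₂ e h₂).obj X₂) :
    (E.tr F₁ e h₁).obj ((A F₁).obj X₁) ≅ (E.tr F₂ e h₂).obj ((A F₂).obj X₂) :=
  eqToIso (Functor.congr_obj (hA F₁ e h₁) X₁).symm ≪≫ (A e).mapIso φ ≪≫
    eqToIso (Functor.congr_obj (hA F₂ e h₂) X₂)

lemma heq_mapTrIso (φ : (D.tr F₁ e h₁).obj X₁ ≅ (D.tr F₂ e h₂).obj X₂) :
    HEq (hA.mapTrIso h₁ h₂ φ) ((A e).mapIso φ) :=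
  heq_eqToIso_trans_trans _ _ _

lemma mapTrIso_symm (φ : (D.tr F₁ e h₁).obj X₁ ≅ (D.tr F₂ e h₂).obj X₂) :
    hA.mapTrIso h₂ h₁ φ.symm = (hA.mapTrIso h₁ h₂ φ).symm := by
  ext
  simp [mapTrIso]

lemma mapTrIso_trans (φ : (D.tr F₁ e h₁).obj X₁ ≅ (D.tr F₂ e h₂).obj X₂)
    (φ' : (D.tr F₂ e h₂).obj X₂ ≅ (D.tr F₃ e h₃).obj X₃) :
    hA.mapTrIso h₁ h₃ (φ ≪≫ φ') = hA.mapTrIso h₁ h₂ φ ≪≫ hA.mapTrIso h₂ h₃ φ' := by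
  ext
  simp [mapTrIso]

lemma tr_map_map (he : e.1 ⊆ F.1) {X Y : D.C e} (f : X ⟶ Y) :
    (E.tr e F he).map ((A e).map f) =
      eqToHom (Functor.congr_obj (hA e F he) X).symm ≫ (A F).map ((D.tr e F he).map f) ≫
        eqToHom (Functor.congr_obj (hA e F he) Y) := by
  simpa using Functor.congr_hom (hA e F he).symm f

lemma trIso_mapTrIso (he : e.1 ⊆ F.1) (φ : (D.tr F₁ e h₁).obj X₁ ≅ (D.tr F₂ e h₂).obj X₂) :
    E.trIso h₁ h₂ he (hA.mapTrIso h₁ h₂ φ) =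
      hA.mapTrIso (h₁.trans he) (h₂.trans he) (D.trIso h₁ h₂ he φ) := by
  ext
  simp [CatOver.trIso, mapTrIso, hA.tr_map_map, eqToHom_map]

lemma mapTrIso_injective [(A e).Faithful] :
    Function.Injective (hA.mapTrIso h₁ h₂ (X₁ := X₁) (X₂ := X₂)) := by
  intro φ φ' h
  ext
  apply (A e).map_injective
  simpa [mapTrIso, cancel_epi, cancel_mono] using congrArg Iso.hom h

noncomputable def preimageTrIso [(A e).Full] [(A e).Faithful]
    (ψ : (E.tr F₁ e h₁).obj ((A F₁).obj X₁) ≅ (E.tr F₂ e h₂).obj ((A F₂).obj X₂)) :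
    (D.tr F₁ e h₁).obj X₁ ≅ (D.tr F₂ e h₂).obj X₂ :=
  (A e).preimageIso (eqToIso (Functor.congr_obj (hA F₁ e h₁) X₁) ≪≫ ψ ≪≫
    eqToIso (Functor.congr_obj (hA F₂ e h₂) X₂).symm)

lemma mapTrIso_preimageTrIso [(A e).Full] [(A e).Faithful]
    (ψ : (E.tr F₁ e h₁).obj ((A F₁).obj X₁) ≅ (E.tr F₂ e h₂).obj ((A F₂).obj X₂)) :
    hA.mapTrIso h₁ h₂ (hA.preimageTrIso h₁ h₂ ψ) = ψ := by
  ext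
  simp [mapTrIso, preimageTrIso]

lemma preimageTrIso_symm [(A e).Full] [(A e).Faithful]
    (ψ : (E.tr F₁ e h₁).obj ((A F₁).obj X₁) ≅ (E.tr F₂ e h₂).obj ((A F₂).obj X₂)) :
    hA.preimageTrIso h₂ h₁ ψ.symm = (hA.preimageTrIso h₁ h₂ ψ).symm :=
  hA.mapTrIso_injective h₂ h₁ (by
    rw [mapTrIso_symm, mapTrIso_preimageTrIso, mapTrIso_preimageTrIso])

noncomputable def liftTrIso [(A e).Full] [(A e).Faithful] {Y₁ : E.C F₁} {Y₂ : E.C F₂}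
    (θ₁ : (A F₁).obj X₁ ≅ Y₁) (θ₂ : (A F₂).obj X₂ ≅ Y₂)
    (ψ : (E.tr F₁ e h₁).obj Y₁ ≅ (E.tr F₂ e h₂).obj Y₂) :
    (D.tr F₁ e h₁).obj X₁ ≅ (D.tr F₂ e h₂).obj X₂ :=
  hA.preimageTrIso h₁ h₂ (E.conjTrIso h₁ h₂ θ₁ θ₂ ψ)

lemma mapTrIso_liftTrIso [(A e).Full] [(A e).Faithful] {Y₁ : E.C F₁} {Y₂ : E.C F₂}
    (θ₁ : (A F₁).obj X₁ ≅ Y₁) (θ₂ : (A F₂).obj X₂ ≅ Y₂)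
    (ψ : (E.tr F₁ e h₁).obj Y₁ ≅ (E.tr F₂ e h₂).obj Y₂) :
    hA.mapTrIso h₁ h₂ (hA.liftTrIso h₁ h₂ θ₁ θ₂ ψ) = E.conjTrIso h₁ h₂ θ₁ θ₂ ψ :=
  hA.mapTrIso_preimageTrIso h₁ h₂ _

lemma mapTrIso_liftTrIso_hom_comp [(A e).Full] [(A e).Faithful] {Y₁ : E.C F₁} {Y₂ : E.C F₂}
    (θ₁ : (A F₁).obj X₁ ≅ Y₁) (θ₂ : (A F₂).obj X₂ ≅ Y₂)
    (ψ : (E.tr F₁ e h₁).obj Y₁ ≅ (E.tr F₂ e h₂).obj Y₂) :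
    (hA.mapTrIso h₁ h₂ (hA.liftTrIso h₁ h₂ θ₁ θ₂ ψ)).hom ≫ (E.tr F₂ e h₂).map θ₂.hom =
      (E.tr F₁ e h₁).map θ₁.hom ≫ ψ.hom := by
  simp [mapTrIso_liftTrIso, CatOver.conjTrIso, ← Functor.map_comp]

lemma liftTrIso_symm [(A e).Full] [(A e).Faithful] {Y₁ : E.C F₁} {Y₂ : E.C F₂}
    (θ₁ : (A F₁).obj X₁ ≅ Y₁) (θ₂ : (A F₂).obj X₂ ≅ Y₂)
    (ψ : (E.tr F₁ e h₁).obj Y₁ ≅ (E.tr F₂ e h₂).obj Y₂) :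
    hA.liftTrIso h₂ h₁ θ₂ θ₁ ψ.symm = (hA.liftTrIso h₁ h₂ θ₁ θ₂ ψ).symm := by
  rw [liftTrIso, liftTrIso, CatOver.conjTrIso_symm, preimageTrIso_symm]

/-- The gluing isomorphisms of descent data live over `{v, w}` and `{w, v}`, which are
equal but not syntactically so. -/
lemma heq_mapTrIso_symm {e' : Face K} (hee : e' = e) (h₁' : F₂.1 ⊆ e'.1) (h₂' : F₁.1 ⊆ e'.1)
    {φ : (D.tr F₁ e h₁).obj X₁ ≅ (D.tr F₂ e h₂).obj X₂}
    {φ' : (D.tr F₂ e' h₁').obj X₂ ≅ (D.tr F₁ e' h₂').obj X₁} (h : HEq φ' φ.symm) :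
    HEq (hA.mapTrIso h₁' h₂' φ') (hA.mapTrIso h₁ h₂ φ).symm := by
  subst hee
  obtain rfl := eq_of_heq h
  exact heq_of_eq (hA.mapTrIso_symm h₁ h₂ φ)

lemma heq_liftTrIso_symm {e' : Face K} (hee : e' = e) (h₁' : F₂.1 ⊆ e'.1) (h₂' : F₁.1 ⊆ e'.1)
    [(A e).Full] [(A e).Faithful] [(A e').Full] [(A e').Faithful] {Y₁ : E.C F₁} {Y₂ : E.C F₂}
    (θ₁ : (A F₁).obj X₁ ≅ Y₁) (θ₂ : (A F₂).obj X₂ ≅ Y₂)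
    {ψ : (E.tr F₁ e h₁).obj Y₁ ≅ (E.tr F₂ e h₂).obj Y₂}
    {ψ' : (E.tr F₂ e' h₁').obj Y₂ ≅ (E.tr F₁ e' h₂').obj Y₁} (h : HEq ψ' ψ.symm) :
    HEq (hA.liftTrIso h₁' h₂' θ₂ θ₁ ψ') (hA.liftTrIso h₁ h₂ θ₁ θ₂ ψ).symm := by
  subst hee
  obtain rfl := eq_of_heq h
  exact heq_of_eq (hA.liftTrIso_symm h₁ h₂ θ₁ θ₂ ψ)

lemma mapTrIso_comm_iff {Y₁ : D.C F₁} {Y₂ : D.C F₂}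
    (φ : (D.tr F₁ e h₁).obj X₁ ≅ (D.tr F₂ e h₂).obj X₂)
    (φ' : (D.tr F₁ e h₁).obj Y₁ ≅ (D.tr F₂ e h₂).obj Y₂) (f₁ : X₁ ⟶ Y₁) (f₂ : X₂ ⟶ Y₂) :
    (hA.mapTrIso h₁ h₂ φ).hom ≫ (E.tr F₂ e h₂).map ((A F₂).map f₂) =
        (E.tr F₁ e h₁).map ((A F₁).map f₁) ≫ (hA.mapTrIso h₁ h₂ φ').hom ↔
      (A e).map (φ.hom ≫ (D.tr F₂ e h₂).map f₂) =
        (A e).map ((D.tr F₁ e h₁).map f₁ ≫ φ'.hom) := by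
  simp only [mapTrIso, Functor.comp_obj, Iso.trans_hom, eqToIso.hom, Functor.mapIso_hom,
    hA.tr_map_map, Category.assoc, eqToHom_trans_assoc, eqToHom_refl, Category.id_comp, cancel_epi,
    Functor.map_comp]
  simp only [← Category.assoc, cancel_mono]

end IsFunctorOver

end Transport

section Descent

variable {D : CatOver.{w, v, u} K} {E : CatOver.{w, v', u'} K}
  {A : ∀ F : Face K, D.C F ⥤ E.C F} (hA : IsFunctorOver D E A)

namespace DescentObj

lemma trIso_cocycle (X : DescentObj D) {a b c : V}
    (hab : a ≠ b) (hbc : b ≠ c) (hac : a ≠ c) (ha : ({a} : Finset V) ∈ K)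
    (hb : ({b} : Finset V) ∈ K) (hc : ({c} : Finset V) ∈ K) (heab : ({a, b} : Finset V) ∈ K)
    (hebc : ({b, c} : Finset V) ∈ K) (heac : ({a, c} : Finset V) ∈ K)
    (hF : ({a, b, c} : Finset V) ∈ K) :
    D.trIso (F := ⟨_, hF⟩) _ _ (subTripUW a b c) (X.φ a c hac ha hc heac) =
      D.trIso _ _ (subTripUV a b c) (X.φ a b hab ha hb heab) ≪≫
        D.trIso _ _ (subTripVW a b c) (X.φ b c hbc hb hc hebc) :=
  X.cocycle a b c hab hbc hac ha hb hc heab hebc heac hF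

lemma ext {X Y : DescentObj D} (hξ : X.ξ = Y.ξ)
    (hφ : ∀ x y hxy hx hy he, HEq (X.φ x y hxy hx hy he) (Y.φ x y hxy hx hy he)) : X = Y := by
  obtain ⟨ξ, φ, _, _⟩ := X
  obtain ⟨ξ', φ', _, _⟩ := Y
  subst hξ
  obtain rfl : φ = φ' := by
    funext x y hxy hx hy he
    exact eq_of_heq (hφ x y hxy hx hy he)
  rfl

def isoMk {X Y : DescentObj D} (θ : ∀ x hx, X.ξ x hx ≅ Y.ξ x hx)
    (comm : ∀ x y hxy hx hy he, (X.φ x y hxy hx hy he).hom ≫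
        (D.tr ⟨{y}, hy⟩ ⟨{x, y}, he⟩ (subPairR x y)).map (θ y hy).hom =
      (D.tr ⟨{x}, hx⟩ ⟨{x, y}, he⟩ (subPairL x y)).map (θ x hx).hom ≫
        (Y.φ x y hxy hx hy he).hom) : X ≅ Y where
  hom := { ψ := fun x hx => (θ x hx).hom, comm := comm }
  inv :=
    { ψ := fun x hx => (θ x hx).inv
      comm := fun x y hxy hx hy he => by
        rw [← Functor.mapIso_inv, ← Functor.mapIso_inv, Iso.comp_inv_eq, Category.assoc,
          Iso.eq_inv_comp]
        exact (comm x y hxy hx hy he).symm }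
  hom_inv_id := DescentHom.ext (funext₂ fun x hx => (θ x hx).hom_inv_id)
  inv_hom_id := DescentHom.ext (funext₂ fun x hx => (θ x hx).inv_hom_id)

lemma eqToHom_ψ {X Y : DescentObj D} (h : X = Y) (x : V) (hx : ({x} : Finset V) ∈ K) :
    DescentHom.ψ (eqToHom h) x hx = eqToHom (congrArg (fun Z : DescentObj D => Z.ξ x hx) h) := by
  subst h
  rfl

end DescentObj

lemma IsInduced.unique {A' A'' : DescentObj D ⥤ DescentObj E} (h' : IsInduced D E A A')
    (h'' : IsInduced D E A A'') : A' = A'' := by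
  have hξ : ∀ X x hx, (A'.obj X).ξ x hx = (A''.obj X).ξ x hx := fun X x hx => by
    rw [h'.1, h''.1]
  have hobj : ∀ X, A'.obj X = A''.obj X := fun X =>
    DescentObj.ext (funext₂ (hξ X)) fun x y hxy hx hy he =>
      (h'.2.1 X x y hxy hx hy he).trans (h''.2.1 X x y hxy hx hy he).symm
  refine CategoryTheory.Functor.ext hobj fun X Y f => DescentHom.ext (funext₂ fun x hx => ?_)
  change _ = DescentHom.ψ (eqToHom (hobj X)) x hx ≫ DescentHom.ψ (A''.map f) x hx ≫
    DescentHom.ψ (eqToHom (hobj Y).symm) x hx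
  rw [DescentObj.eqToHom_ψ, DescentObj.eqToHom_ψ]
  exact (conj_eqToHom_iff_heq _ _ (hξ X x hx) (hξ Y x hx)).2
    ((h'.2.2 X Y f x hx).trans (h''.2.2 X Y f x hx).symm)

namespace IsFunctorOver

def descentObj (X : DescentObj D) : DescentObj E where
  ξ x hx := (A ⟨{x}, hx⟩).obj (X.ξ x hx)
  φ x y hxy hx hy he := hA.mapTrIso _ _ (X.φ x y hxy hx hy he)
  φ_symm x y hxy hx hy he he' :=
    hA.heq_mapTrIso_symm _ _ (Subtype.ext (Finset.pair_comm y x)) _ _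
      (X.φ_symm x y hxy hx hy he he')
  cocycle a b c hab hbc hac ha hb hc heab hebc heac hF := by
    change E.trIso _ _ (subTripUW a b c) _ =
      E.trIso _ _ (subTripUV a b c) _ ≪≫ E.trIso _ _ (subTripVW a b c) _
    rw [hA.trIso_mapTrIso, hA.trIso_mapTrIso, hA.trIso_mapTrIso, ← hA.mapTrIso_trans,
      X.trIso_cocycle hab hbc hac ha hb hc heab hebc heac hF]

def descentFunctor : DescentObj D ⥤ DescentObj E where
  obj := hA.descentObj
  map f :=
    { ψ := fun x hx => (A ⟨{x}, hx⟩).map (f.ψ x hx)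
      comm := fun x y hxy hx hy he =>
        (hA.mapTrIso_comm_iff _ _ _ _ _ _).2 (congrArg _ (f.comm x y hxy hx hy he)) }
  map_id _ := DescentHom.ext (funext₂ fun x hx => (A ⟨{x}, hx⟩).map_id _)
  map_comp _ _ := DescentHom.ext (funext₂ fun x hx => (A ⟨{x}, hx⟩).map_comp _ _)

lemma isInduced_descentFunctor : IsInduced D E A hA.descentFunctor :=
  ⟨fun _ _ _ => rfl, fun _ _ _ _ _ _ _ => hA.heq_mapTrIso _ _ _, fun _ _ _ _ _ => HEq.rfl⟩

lemma descentFunctor_faithful (hvert : ∀ x hx, (A ⟨{x}, hx⟩).Faithful) :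
    hA.descentFunctor.Faithful where
  map_injective h := DescentHom.ext (funext₂ fun x hx =>
    (hvert x hx).map_injective (congrFun₂ (congrArg DescentHom.ψ h) x hx))

lemma descentFunctor_full (hvert : ∀ x hx, (A ⟨{x}, hx⟩).Full)
    (hedge : ∀ x y, x ≠ y → ∀ he, (A ⟨{x, y}, he⟩).Faithful) :
    hA.descentFunctor.Full where
  map_surjective {X Y} g := by
    choose ψ hψ using fun x hx => (hvert x hx).map_surjective (g.ψ x hx)
    refine ⟨{ ψ := ψ, comm := fun x y hxy hx hy he => ?_ }, DescentHom.ext (funext₂ hψ)⟩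
    have := hedge x y hxy he
    apply (A ⟨{x, y}, he⟩).map_injective
    rw [← hA.mapTrIso_comm_iff, hψ, hψ]
    exact g.comm x y hxy hx hy he

noncomputable def liftDescentObj (Y : DescentObj E) (ξ : ∀ x hx, D.C ⟨{x}, hx⟩)
    (θ : ∀ x hx, (A ⟨{x}, hx⟩).obj (ξ x hx) ≅ Y.ξ x hx)
    (hedgeFull : ∀ x y, x ≠ y → ∀ he, (A ⟨{x, y}, he⟩).Full)
    (hedgeFaithful : ∀ x y, x ≠ y → ∀ he, (A ⟨{x, y}, he⟩).Faithful)
    (hface : ∀ x y z, x ≠ y → y ≠ z → x ≠ z → ∀ hF, (A ⟨{x, y, z}, hF⟩).Faithful) :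
    DescentObj D where
  ξ := ξ
  φ x y hxy hx hy he :=
    have := hedgeFull x y hxy he
    have := hedgeFaithful x y hxy he
    hA.liftTrIso _ _ (θ x hx) (θ y hy) (Y.φ x y hxy hx hy he)
  φ_symm x y hxy hx hy he he' :=
    have := hedgeFull x y hxy he
    have := hedgeFaithful x y hxy he
    have := hedgeFull y x hxy.symm he'
    have := hedgeFaithful y x hxy.symm he'
    hA.heq_liftTrIso_symm _ _ (Subtype.ext (Finset.pair_comm y x)) _ _ _ _
      (Y.φ_symm x y hxy hx hy he he')
  cocycle a b c hab hbc hac ha hb hc heab hebc heac hF := by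
    have := hface a b c hab hbc hac hF
    have := hedgeFull a b hab heab
    have := hedgeFaithful a b hab heab
    have := hedgeFull b c hbc hebc
    have := hedgeFaithful b c hbc hebc
    have := hedgeFull a c hac heac
    have := hedgeFaithful a c hac heac
    change D.trIso _ _ (subTripUW a b c) _ =
      D.trIso _ _ (subTripUV a b c) _ ≪≫ D.trIso _ _ (subTripVW a b c) _
    apply hA.mapTrIso_injective
    rw [hA.mapTrIso_trans, ← hA.trIso_mapTrIso, ← hA.trIso_mapTrIso, ← hA.trIso_mapTrIso,
      mapTrIso_liftTrIso, mapTrIso_liftTrIso, mapTrIso_liftTrIso, CatOver.trIso_conjTrIso,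
      CatOver.trIso_conjTrIso, CatOver.trIso_conjTrIso, CatOver.conjTrIso_trans,
      Y.trIso_cocycle hab hbc hac ha hb hc heab hebc heac hF]

noncomputable def descentObjLiftIso (Y : DescentObj E) (ξ : ∀ x hx, D.C ⟨{x}, hx⟩)
    (θ : ∀ x hx, (A ⟨{x}, hx⟩).obj (ξ x hx) ≅ Y.ξ x hx)
    (hedgeFull : ∀ x y, x ≠ y → ∀ he, (A ⟨{x, y}, he⟩).Full)
    (hedgeFaithful : ∀ x y, x ≠ y → ∀ he, (A ⟨{x, y}, he⟩).Faithful)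
    (hface : ∀ x y z, x ≠ y → y ≠ z → x ≠ z → ∀ hF, (A ⟨{x, y, z}, hF⟩).Faithful) :
    hA.descentObj (hA.liftDescentObj Y ξ θ hedgeFull hedgeFaithful hface) ≅ Y :=
  DescentObj.isoMk θ fun x y hxy hx hy he => by
    have := hedgeFull x y hxy he
    have := hedgeFaithful x y hxy he
    exact hA.mapTrIso_liftTrIso_hom_comp _ _ _ _ _

lemma descentFunctor_essSurj (hvert : ∀ x hx, (A ⟨{x}, hx⟩).EssSurj)
    (hedgeFull : ∀ x y, x ≠ y → ∀ he, (A ⟨{x, y}, he⟩).Full)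
    (hedgeFaithful : ∀ x y, x ≠ y → ∀ he, (A ⟨{x, y}, he⟩).Faithful)
    (hface : ∀ x y z, x ≠ y → y ≠ z → x ≠ z → ∀ hF, (A ⟨{x, y, z}, hF⟩).Faithful) :
    hA.descentFunctor.EssSurj where
  mem_essImage Y := by
    choose ξ θ using fun x hx => (hvert x hx).mem_essImage (Y.ξ x hx)
    exact ⟨_, ⟨hA.descentObjLiftIso Y ξ (fun x hx => (θ x hx).some) hedgeFull hedgeFaithful hface⟩⟩

lemma descentFunctor_isEquivalence (hvert : ∀ x hx, (A ⟨{x}, hx⟩).IsEquivalence)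
    (hedgeFull : ∀ x y, x ≠ y → ∀ he, (A ⟨{x, y}, he⟩).Full)
    (hedgeFaithful : ∀ x y, x ≠ y → ∀ he, (A ⟨{x, y}, he⟩).Faithful)
    (hface : ∀ x y z, x ≠ y → y ≠ z → x ≠ z → ∀ hF, (A ⟨{x, y, z}, hF⟩).Faithful) :
    hA.descentFunctor.IsEquivalence where
  faithful := hA.descentFunctor_faithful fun x hx => (hvert x hx).faithful
  full := hA.descentFunctor_full (fun x hx => (hvert x hx).full) hedgeFaithful
  essSurj :=
    hA.descentFunctor_essSurj (fun x hx => (hvert x hx).essSurj) hedgeFull hedgeFaithful hface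

end IsFunctorOver

end Descent

theorem statement11_general {V : Type w} [DecidableEq V] {K : Set (Finset V)}
    (D : CatOver.{w, v, u} K) (E : CatOver.{w, v', u'} K)
    (A : ∀ F : Face K, D.C F ⥤ E.C F)
    (hA : ∀ (F₁ F₂ : Face K) (h : F₁.1 ⊆ F₂.1),
      D.tr F₁ F₂ h ⋙ A F₂ = A F₁ ⋙ E.tr F₁ F₂ h)
    (hvert : ∀ (x : V) (hx : ({x} : Finset V) ∈ K), (A ⟨{x}, hx⟩).IsEquivalence)
    (hedgefull : ∀ (x y : V), x ≠ y → ∀ he : ({x, y} : Finset V) ∈ K,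
      (A ⟨{x, y}, he⟩).Full)
    (hedgefaithful : ∀ (x y : V), x ≠ y → ∀ he : ({x, y} : Finset V) ∈ K,
      (A ⟨{x, y}, he⟩).Faithful)
    (hfacefaithful : ∀ (x y z : V), x ≠ y → y ≠ z → x ≠ z →
      ∀ hF : ({x, y, z} : Finset V) ∈ K, (A ⟨{x, y, z}, hF⟩).Faithful) :
    (∃ A' : DescentObj D ⥤ DescentObj E, IsInduced D E A A') ∧
      ∀ A' : DescentObj D ⥤ DescentObj E, IsInduced D E A A' → A'.IsEquivalence := by
  have hinduced := IsFunctorOver.isInduced_descentFunctor hA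
  refine ⟨⟨_, hinduced⟩, fun A' hA' => ?_⟩
  rw [IsInduced.unique hA' hinduced]
  exact IsFunctorOver.descentFunctor_isEquivalence hA hvert hedgefull hedgefaithful hfacefaithful

/-- if a functor `A` between categories over a connected (≤2)-dimensional
simplicial complex `Σ` is an equivalence on vertices, fully faithful on edges and
faithful on 2-faces, then the induced functor between descent categories is an
equivalence of categories. -/
theorem statement11 {V : Type w} [DecidableEq V] {K : Set (Finset V)}
    (hne : ∃ x : V, ({x} : Finset V) ∈ K)
    (hfaces : ∀ F ∈ K, Finset.Nonempty F)
    (hcard : ∀ F ∈ K, F.card ≤ 3)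
    (hdown : ∀ F ∈ K, ∀ F' : Finset V, F' ⊆ F → F'.Nonempty → F' ∈ K)
    (hconn : ∀ x y : V, ({x} : Finset V) ∈ K → ({y} : Finset V) ∈ K →
      Relation.ReflTransGen (fun a b : V => ({a, b} : Finset V) ∈ K) x y)
    (D : CatOver.{w, v, u} K) (E : CatOver.{w, v', u'} K)
    (A : ∀ F : Face K, D.C F ⥤ E.C F)
    (hA : ∀ (F₁ F₂ : Face K) (h : F₁.1 ⊆ F₂.1),
      D.tr F₁ F₂ h ⋙ A F₂ = A F₁ ⋙ E.tr F₁ F₂ h)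
    (hvert : ∀ (x : V) (hx : ({x} : Finset V) ∈ K), (A ⟨{x}, hx⟩).IsEquivalence)
    (hedgefull : ∀ (x y : V), x ≠ y → ∀ he : ({x, y} : Finset V) ∈ K,
      (A ⟨{x, y}, he⟩).Full)
    (hedgefaithful : ∀ (x y : V), x ≠ y → ∀ he : ({x, y} : Finset V) ∈ K,
      (A ⟨{x, y}, he⟩).Faithful)
    (hfacefaithful : ∀ (x y z : V), x ≠ y → y ≠ z → x ≠ z →
      ∀ hF : ({x, y, z} : Finset V) ∈ K, (A ⟨{x, y, z}, hF⟩).Faithful) :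
    (∃ A' : DescentObj D ⥤ DescentObj E, IsInduced D E A A') ∧
      ∀ A' : DescentObj D ⥤ DescentObj E, IsInduced D E A A' → A'.IsEquivalence :=
  statement11_general D E A hA hvert hedgefull hedgefaithful hfacefaithful
end
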